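/- arXiv:2310.09034 — 2 statements merged into one kernel-verified Lean document; each statement's English description precedes it below -/
import Mathlib

section
/- Let Ω ⊂ ℝⁿ (n ≥ 2) be a bounded convex domain, let q ∈ [0, n), let a₁,…,a_{n−1} ≥ 1, set ā = Σ_{i=1}^{n−1} 2/a_i, and assume n − ā − 2 > 0. Let x₀ ∈ ∂Ω and suppose Ω satisfies the (a₁,…,a_{n−1})-exterior convex condition at x₀ with constants η₁,…,η_{n−1}. If u ∈ C(Ω̄) is an Aleksandrov super-solution of the Dirichlet problem det D²u = |u|^q in Ω, u = 0 on ∂Ω, then |u(x)| ≤ C·d_x^λ for every x ∈ Ω with d_x = |x − x₀|, where λ = (ā + 2)/n and C > 0 depends only on n, q, diam Ω, λ and a₁,…,a_{n−1}, η₁,…,η_{n−1}. -/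
open MeasureTheory Metric Set
open scoped RealInnerProductSpace ENNReal

noncomputable section

/-- Index of the last coordinate of `ℝⁿ`. -/
def lastIdx (n : ℕ) (hn : 2 ≤ n) : Fin n := ⟨n - 1, by omega⟩

/-- Embedding of the first `n - 1` coordinate indices into `Fin n`. -/
def coordIdx (n : ℕ) (i : Fin (n - 1)) : Fin n := Fin.castLE (Nat.sub_le n 1) i

/-- `ā = ∑ᵢ 2 / aᵢ`. -/
def abar (n : ℕ) (a : Fin (n - 1) → ℝ) : ℝ := ∑ i, 2 / a i

/-- `θ = (ā + 2 + k) / (2n + 2k + 2)`. -/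
def thetaVal (n : ℕ) (k : ℝ) (a : Fin (n - 1) → ℝ) : ℝ :=
  (abar n a + 2 + k) / (2 * n + 2 * k + 2)

/-- The model exterior region `{x : xₙ > ∑ ηᵢ |xᵢ|^{aᵢ}}`. -/
def extSet (n : ℕ) (hn : 2 ≤ n) (a η : Fin (n - 1) → ℝ) : Set (EuclideanSpace ℝ (Fin n)) :=
  {x | (∑ i, η i * |x (coordIdx n i)| ^ a i) < x (lastIdx n hn)}

/-- The model interior region `{x : ∑ ηᵢ |xᵢ|^{aᵢ} < xₙ < h}`. -/
def intSet (n : ℕ) (hn : 2 ≤ n) (a η : Fin (n - 1) → ℝ) (h : ℝ) :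
    Set (EuclideanSpace ℝ (Fin n)) :=
  {x | (∑ i, η i * |x (coordIdx n i)| ^ a i) < x (lastIdx n hn) ∧ x (lastIdx n hn) < h}

/-- `Ω` satisfies the `(a₁, …, a_{n-1})`-exterior convex condition at `x₀` with constants `η`. -/
def ExtCondAt (n : ℕ) (hn : 2 ≤ n) (a η : Fin (n - 1) → ℝ)
    (Ω : Set (EuclideanSpace ℝ (Fin n))) (x₀ : EuclideanSpace ℝ (Fin n)) : Prop :=
  ∃ T : EuclideanSpace ℝ (Fin n) ≃ᵃⁱ[ℝ] EuclideanSpace ℝ (Fin n),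
    T x₀ = 0 ∧ T '' Ω ⊆ extSet n hn a η

/-- `Ω` satisfies the `(a₁, …, a_{n-1})`-interior convex condition at `x₀`
with constants `η, h`. -/
def IntCondAt (n : ℕ) (hn : 2 ≤ n) (a η : Fin (n - 1) → ℝ) (h : ℝ)
    (Ω : Set (EuclideanSpace ℝ (Fin n))) (x₀ : EuclideanSpace ℝ (Fin n)) : Prop :=
  ∃ T : EuclideanSpace ℝ (Fin n) ≃ᵃⁱ[ℝ] EuclideanSpace ℝ (Fin n),
    T x₀ = 0 ∧ intSet n hn a η h ⊆ T '' Ω ∧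
      T '' Ω ⊆ {x | 0 < x (lastIdx n hn)}

/-- The Hessian determinant `det D²f(x)`. -/
def hessDet (n : ℕ) (f : EuclideanSpace ℝ (Fin n) → ℝ) (x : EuclideanSpace ℝ (Fin n)) : ℝ :=
  (Matrix.of fun i j : Fin n =>
    iteratedFDeriv ℝ 2 f x ![EuclideanSpace.single i 1, EuclideanSpace.single j 1]).det

/-- Convex viscosity super-solution of `det D²u = |u|^{-n-k-2} (x·Du - u)^{-k}` in `Ω`. -/
def IsViscSuper (n : ℕ) (k : ℝ) (Ω : Set (EuclideanSpace ℝ (Fin n)))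
    (u : EuclideanSpace ℝ (Fin n) → ℝ) : Prop :=
  ∀ φ : EuclideanSpace ℝ (Fin n) → ℝ, ContDiffOn ℝ 2 φ Ω → ConvexOn ℝ Ω φ →
    ∀ x₀ ∈ Ω, (∀ᶠ x in nhds x₀, u x₀ - φ x₀ ≤ u x - φ x) →
      hessDet n φ x₀ ≤
        |u x₀| ^ (-(n : ℝ) - k - 2) * (⟪x₀, gradient φ x₀⟫ - u x₀) ^ (-k)

/-- Convex viscosity sub-solution of `det D²u = |u|^{-n-k-2} (x·Du - u)^{-k}` in `Ω`. -/
def IsViscSub (n : ℕ) (k : ℝ) (Ω : Set (EuclideanSpace ℝ (Fin n)))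
    (u : EuclideanSpace ℝ (Fin n) → ℝ) : Prop :=
  ∀ φ : EuclideanSpace ℝ (Fin n) → ℝ, ContDiffOn ℝ 2 φ Ω → ConvexOn ℝ Ω φ →
    ∀ x₀ ∈ Ω, (∀ᶠ x in nhds x₀, u x - φ x ≤ u x₀ - φ x₀) →
      |u x₀| ^ (-(n : ℝ) - k - 2) * (⟪x₀, gradient φ x₀⟫ - u x₀) ^ (-k) ≤ hessDet n φ x₀

/-- The subdifferential `∂u(x)` of a convex function on `Ω`. -/
def subdiff (n : ℕ) (Ω : Set (EuclideanSpace ℝ (Fin n)))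
    (u : EuclideanSpace ℝ (Fin n) → ℝ) (x : EuclideanSpace ℝ (Fin n)) :
    Set (EuclideanSpace ℝ (Fin n)) :=
  {p | ∀ y ∈ Ω, u x + ⟪p, y - x⟫ ≤ u y}

/-- The Monge–Ampère measure `Mu(E) = |∂u(E)|`. -/
def maMeasure (n : ℕ) (Ω : Set (EuclideanSpace ℝ (Fin n)))
    (u : EuclideanSpace ℝ (Fin n) → ℝ) (E : Set (EuclideanSpace ℝ (Fin n))) : ℝ≥0∞ :=
  volume (⋃ x ∈ E, subdiff n Ω u x)

/-- Aleksandrov super-solution of `det D²u = |u|^q` in `Ω`. -/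
def IsAlekSuper (n : ℕ) (q : ℝ) (Ω : Set (EuclideanSpace ℝ (Fin n)))
    (u : EuclideanSpace ℝ (Fin n) → ℝ) : Prop :=
  ∀ E ⊆ Ω, MeasurableSet E →
    maMeasure n Ω u E ≤ ∫⁻ x in E, ENNReal.ofReal (|u x| ^ q)

/-- Aleksandrov solution of `det D²u = |u|^q` in `Ω`. -/
def IsAlekSol (n : ℕ) (q : ℝ) (Ω : Set (EuclideanSpace ℝ (Fin n)))
    (u : EuclideanSpace ℝ (Fin n) → ℝ) : Prop :=
  ∀ E ⊆ Ω, MeasurableSet E →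
    maMeasure n Ω u E = ∫⁻ x in E, ENNReal.ofReal (|u x| ^ q)

/-- The barrier `W(x) = -∑ᵢ [(xₙ/ε)^{2/aᵢ} - xᵢ²]^{aᵢθ/2}`. -/
def Wfun (n : ℕ) (hn : 2 ≤ n) (a : Fin (n - 1) → ℝ) (θ ε : ℝ)
    (x : EuclideanSpace ℝ (Fin n)) : ℝ :=
  -∑ i, ((x (lastIdx n hn) / ε) ^ (2 / a i) - x (coordIdx n i) ^ 2) ^ (a i * θ / 2)

/-- The open ellipsoid `E`. -/
def ellip (n : ℕ) (hn : 2 ≤ n) (a : Fin (n - 1) → ℝ) (c η ht : ℝ) :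
    Set (EuclideanSpace ℝ (Fin n)) :=
  {x | (∑ i, x (coordIdx n i) ^ 2 / (c * (ht / η) ^ (1 / a i)) ^ 2)
      + (x (lastIdx n hn) - 3 / 4 * ht) ^ 2 / (c * ht) ^ 2 < 1}

/-- The affine change of variables `z ↦ x`. -/
def chg (n : ℕ) (a : Fin (n - 1) → ℝ) (c η ht : ℝ)
    (z : EuclideanSpace ℝ (Fin n)) : EuclideanSpace ℝ (Fin n) :=
  (EuclideanSpace.equiv (Fin n) ℝ).symm fun j =>
    if hj : (j : ℕ) < n - 1 then c * (ht / η) ^ (1 / a ⟨j.1, hj⟩) * z j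
    else c * ht * z j + 3 / 4 * ht

/-- The point `(0, …, 0, t)` on the `xₙ`-axis. -/
def axisPt (n : ℕ) (t : ℝ) : EuclideanSpace ℝ (Fin n) :=
  (EuclideanSpace.equiv (Fin n) ℝ).symm fun j => if (j : ℕ) = n - 1 then t else 0

/-!
After a rigid motion, `x₀ = 0` and `Ω` lies above the graph `xₙ > ∑ ηᵢ |xᵢ| ^ aᵢ`, so the slab
`Ω ∩ {xₙ < H}` fits in a box with sides `2 (H / ηᵢ) ^ (1 / aᵢ)` and `H`, of volume
`≍ H ^ ((ā + 2) / 2)`.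

The tool is Aleksandrov's estimate: if a convex `v = u + (affine)` dips to `-m` inside an open
`A` and is nonnegative on its boundary, the subgradients of `u` over `A` contain a box of slopes
of volume `(2m / n) ^ n / ∏ Rⱼ` (`Rⱼ` the widths of `A`), while the super-solution property caps
their volume by `∫_A |u| ^ q ≤ sup |u| ^ q · 2 ^ n ∏ Rⱼ`.

By the maximum principle `u ≤ 0`, and the estimate on `{u < 0}` gives `|u| ≤ M`. If `-u ≤ B` on
`{xₙ ≤ H}`, then `u + (B / H) xₙ` is nonnegative on the boundary of its negative part in the
slab, and the estimate bounds its depth by `C H ^ λ`, `λ = (ā + 2) / n`; hence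
`-u ≤ C H ^ λ + B / 2` on `{xₙ ≤ H / 2}`. As `λ < 1`, this halving step preserves a bound `-u ≤ K H ^ λ` on `{xₙ ≤ H}`,
and `xₙ ≤ |x - x₀|`.
-/

theorem IsMaxOn.le_of_convexOn {E : Type*} [NormedAddCommGroup E] [NormedSpace ℝ E]
    {s : Set E} {f : E → ℝ} {z y : E} (hmax : IsMaxOn f s z) (hz : s ∈ nhds z)
    (hf : ConvexOn ℝ s f) (hy : y ∈ s) : f z ≤ f y := by
  have hcont : Continuous fun t : ℝ => z + t • (z - y) := by fun_prop
  have hmem : ∀ᶠ t in nhdsWithin (0 : ℝ) (Ioi 0), z + t • (z - y) ∈ s :=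
    nhdsWithin_le_nhds (hcont.tendsto' 0 z (by simp) hz)
  obtain ⟨t, hw, ht : 0 < t⟩ := (hmem.and self_mem_nhdsWithin).exists
  have h1 : 0 < 1 + t := by positivity
  have hcomb : (1 / (1 + t)) • (z + t • (z - y)) + (t / (1 + t)) • y = z := by
    match_scalars
    · field_simp
    · ring
  have h := hf.2 hw hy (show 0 ≤ 1 / (1 + t) by positivity)
    (show 0 ≤ t / (1 + t) by positivity) (by field_simp)
  rw [hcomb, smul_eq_mul, smul_eq_mul] at h
  have hwz : f (z + t • (z - y)) ≤ f z := hmax hw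
  rw [div_mul_eq_mul_div, div_mul_eq_mul_div, ← add_div, le_div_iff₀ h1] at h
  nlinarith

theorem ConvexOn.nonpos_of_eq_zero_on_frontier {E : Type*} [NormedAddCommGroup E] [NormedSpace ℝ E]
    [ProperSpace E] {Ω : Set E} {u : E → ℝ} {ζ : E} (hΩo : IsOpen Ω)
    (hΩb : Bornology.IsBounded Ω) (hζ : ζ ∈ frontier Ω) (hu : ConvexOn ℝ Ω u)
    (hu_cont : ContinuousOn u (closure Ω)) (hfr : ∀ x ∈ frontier Ω, u x = 0) :
    ∀ y ∈ Ω, u y ≤ 0 := by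
  obtain ⟨z, hz, hmax⟩ := hΩb.isCompact_closure.exists_isMaxOn
    ⟨ζ, frontier_subset_closure hζ⟩ hu_cont
  intro y hy
  refine (hmax (subset_closure hy)).trans ?_
  rcases (closure_eq_self_union_frontier Ω ▸ hz) with hzΩ | hzfr
  · have hconst : ∀ w ∈ Ω, u z ≤ u w := fun w hw =>
      (hmax.on_subset subset_closure).le_of_convexOn (hΩo.mem_nhds hzΩ) hu hw
    rw [← hfr ζ hζ]
    exact ContinuousWithinAt.closure_le (frontier_subset_closure hζ) continuousWithinAt_const
      ((hu_cont ζ (frontier_subset_closure hζ)).mono subset_closure) hconst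
  · exact (hfr z hzfr).le

section Coordinates

variable {ι : Type*} [Fintype ι] (L : EuclideanSpace ℝ ι ≃ₗᵢ[ℝ] EuclideanSpace ℝ ι)

theorem volume_setOf_forall_linearIsometryEquiv_sub_mem (c : EuclideanSpace ℝ ι)
    {s : ι → Set ℝ} (hs : ∀ j, MeasurableSet (s j)) :
    volume {p : EuclideanSpace ℝ ι | ∀ j, L (p - c) j ∈ s j} = ∏ j, volume (s j) := by
  have hset : {p : EuclideanSpace ℝ ι | ∀ j, L (p - c) j ∈ s j} =
      (· + -c) ⁻¹' (L ⁻¹' (WithLp.ofLp ⁻¹' Set.univ.pi s)) := by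
    ext p; simp [sub_eq_add_neg]
  rw [hset, measure_preimage_add_right, L.measurePreserving.measure_preimage
      (measurableSet_preimage (PiLp.volume_preserving_ofLp ι).measurable
        (MeasurableSet.univ_pi hs)).nullMeasurableSet,
    (PiLp.volume_preserving_ofLp ι).measure_preimage (MeasurableSet.univ_pi hs).nullMeasurableSet,
    volume_pi_pi]

theorem volume_setOf_forall_abs_linearIsometryEquiv_sub_lt (c : EuclideanSpace ℝ ι)
    (r : ι → ℝ) :
    volume {p : EuclideanSpace ℝ ι | ∀ j, |L (p - c) j| < r j} =
      ∏ j, ENNReal.ofReal (2 * r j) := by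
  simp_rw [abs_lt, ← mem_Ioo,
    volume_setOf_forall_linearIsometryEquiv_sub_mem L c fun j => measurableSet_Ioo,
    Real.volume_Ioo, sub_neg_eq_add, two_mul]

theorem volume_setOf_forall_abs_linearIsometryEquiv_sub_le (c : EuclideanSpace ℝ ι)
    (r : ι → ℝ) :
    volume {p : EuclideanSpace ℝ ι | ∀ j, |L (p - c) j| ≤ r j} =
      ∏ j, ENNReal.ofReal (2 * r j) := by
  simp_rw [abs_le, ← mem_Icc,
    volume_setOf_forall_linearIsometryEquiv_sub_mem L c fun j => measurableSet_Icc,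
    Real.volume_Icc, sub_neg_eq_add, two_mul]

theorem inner_le_sum_abs_mul {p w : EuclideanSpace ℝ ι} {R : ι → ℝ}
    (hw : ∀ j, |L w j| ≤ R j) : ⟪p, w⟫ ≤ ∑ j, |L p j| * R j := by
  rw [← L.inner_map_map, PiLp.inner_apply]
  refine Finset.sum_le_sum fun j _ => ?_
  calc ⟪L p j, L w j⟫ ≤ |L p j| * |L w j| := by
        simpa only [Real.norm_eq_abs] using real_inner_le_norm (L p j) (L w j)
    _ ≤ |L p j| * R j := mul_le_mul_of_nonneg_left (hw j) (abs_nonneg _)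

end Coordinates

section Subdifferential

variable {n : ℕ} {Ω A : Set (EuclideanSpace ℝ (Fin n))} {u v : EuclideanSpace ℝ (Fin n) → ℝ}

theorem sub_mem_subdiff_of_mem_subdiff_add_inner {g p z : EuclideanSpace ℝ (Fin n)} {b : ℝ}
    (hp : p ∈ subdiff n Ω (fun y => u y + ⟪g, y⟫ + b) z) : p - g ∈ subdiff n Ω u z := by
  intro y hy
  have h := hp y hy
  simp only [inner_sub_left, inner_sub_right] at h ⊢
  linarith

theorem mem_subdiff_of_isMinOn {p z : EuclideanSpace ℝ (Fin n)} (hv : ConvexOn ℝ Ω v)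
    (hA : A ∈ nhds z) (hzΩ : z ∈ Ω) (hmin : IsMinOn (fun w => v w - ⟪p, w⟫) A z) :
    p ∈ subdiff n Ω v z := by
  have hconv : ConvexOn ℝ Ω (fun w => v w - ⟪p, w⟫) :=
    hv.sub ((innerₛₗ ℝ p).concaveOn hv.1)
  have hglob := IsMinOn.of_isLocalMinOn_of_convexOn hzΩ ((hmin.isLocalMin hA).on Ω) hconv
  intro y hy
  have h : v z - ⟪p, z⟫ ≤ v y - ⟪p, y⟫ := hglob hy
  show v z + ⟪p, y - z⟫ ≤ v y
  rw [inner_sub_right]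
  linarith

/-- Lowering the plane `v z₀ + ⟪p, · - z₀⟫`, which lies below `0 ≤ v` on the boundary of `A`,
until it touches the graph of `v` yields a contact point inside `A`. -/
theorem exists_mem_subdiff_of_inner_lt {p z₀ : EuclideanSpace ℝ (Fin n)}
    (hv : ConvexOn ℝ Ω v) (hAo : IsOpen A) (hAb : Bornology.IsBounded A) (hAΩ : A ⊆ Ω)
    (hvc : ContinuousOn v (closure A)) (hbd : ∀ y ∈ closure A \ A, 0 ≤ v y) (hz₀ : z₀ ∈ A)
    (hp : ∀ w ∈ closure A, ⟪p, w - z₀⟫ < -v z₀) : ∃ z ∈ A, p ∈ subdiff n Ω v z := by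
  obtain ⟨z, hzcl, hmin⟩ := hAb.isCompact_closure.exists_isMinOn ⟨z₀, subset_closure hz₀⟩
    (hvc.sub (continuous_const.inner continuous_id).continuousOn)
  have hzA : z ∈ A := by
    by_contra hzA
    have h₀ : v z - ⟪p, z⟫ ≤ v z₀ - ⟪p, z₀⟫ := hmin (subset_closure hz₀)
    have h₁ := hp z hzcl
    rw [inner_sub_right] at h₁
    linarith [hbd z ⟨hzcl, hzA⟩]
  exact ⟨z, hzA, mem_subdiff_of_isMinOn hv (hAo.mem_nhds hzA) (hAΩ hzA)
    (hmin.on_subset subset_closure)⟩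

end Subdifferential

section Aleksandrov

variable {n : ℕ} {q S m b : ℝ} {Ω A : Set (EuclideanSpace ℝ (Fin n))}
  {u : EuclideanSpace ℝ (Fin n) → ℝ} {g z₀ : EuclideanSpace ℝ (Fin n)} {R : Fin n → ℝ}
  (L : EuclideanSpace ℝ (Fin n) ≃ₗᵢ[ℝ] EuclideanSpace ℝ (Fin n))

theorem setOf_abs_lt_subset_biUnion_subdiff (hn : 0 < n) (hu : ConvexOn ℝ Ω u)
    (hAo : IsOpen A) (hAb : Bornology.IsBounded A) (hAΩ : A ⊆ Ω)
    (hu_cont : ContinuousOn u (closure A)) (hbd : ∀ y ∈ closure A \ A, 0 ≤ u y + ⟪g, y⟫ + b)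
    (hz₀ : z₀ ∈ A) (hmz : u z₀ + ⟪g, z₀⟫ + b = -m)
    (hR : ∀ j, 0 < R j) (hwidth : ∀ y ∈ A, ∀ j, |L (y - z₀) j| ≤ R j) :
    {p | ∀ j, |L (p + g) j| < m / (n * R j)} ⊆ ⋃ z ∈ A, subdiff n Ω u z := by
  have hn' : (0 : ℝ) < n := Nat.cast_pos.2 hn
  have hwidth' : ∀ w ∈ closure A, ∀ j, |L (w - z₀) j| ≤ R j := by
    have hcl : IsClosed {w : EuclideanSpace ℝ (Fin n) | ∀ j, |L (w - z₀) j| ≤ R j} := by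
      simp only [ofPred_forall]
      exact isClosed_iInter fun j => isClosed_le (by fun_prop) continuous_const
    exact fun w hw => closure_minimal hwidth hcl hw
  intro p hp
  have hinner : ∀ w ∈ closure A, ⟪p + g, w - z₀⟫ < -(u z₀ + ⟪g, z₀⟫ + b) := by
    intro w hw
    have : Nonempty (Fin n) := ⟨⟨0, hn⟩⟩
    calc ⟪p + g, w - z₀⟫ ≤ ∑ j, |L (p + g) j| * R j := inner_le_sum_abs_mul L (hwidth' w hw)
      _ < ∑ _j : Fin n, m / n := by
        refine Finset.sum_lt_sum_of_nonempty Finset.univ_nonempty fun j _ => ?_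
        rw [lt_div_iff₀ hn', mul_right_comm, mul_assoc]
        exact (lt_div_iff₀ (mul_pos hn' (hR j))).1 (hp j)
      _ = -(u z₀ + ⟪g, z₀⟫ + b) := by rw [hmz, Fin.sum_const, nsmul_eq_mul]; field_simp
  obtain ⟨z, hzA, hz⟩ := exists_mem_subdiff_of_inner_lt
    ((hu.add ((innerₛₗ ℝ g).convexOn hu.1)).add_const b) hAo hAb hAΩ
    ((hu_cont.add (by fun_prop)).add continuousOn_const) hbd hz₀ hinner
  exact mem_biUnion hzA (by simpa using sub_mem_subdiff_of_mem_subdiff_add_inner hz)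

theorem pow_le_of_prod_le (hn : 0 < n) (hR : ∀ j, 0 < R j)
    (h : ∏ j, 2 * (m / (n * R j)) ≤ S * ∏ j, 2 * R j) :
    m ^ n ≤ n ^ n * S * (∏ j, R j) ^ 2 := by
  have hprod : (∏ j, 2 * (m / (n * R j))) * ∏ j, R j = (2 * m / n) ^ n := by
    rw [← Finset.prod_mul_distrib, ← Fin.prod_const]
    refine Finset.prod_congr rfl fun j _ => ?_
    field_simp [(hR j).ne']
  calc m ^ n = (n : ℝ) ^ n / 2 ^ n * (2 * m / n) ^ n := by
        rw [div_pow, mul_pow]; field_simp [(Nat.cast_pos.2 hn).ne']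
    _ ≤ (n : ℝ) ^ n / 2 ^ n * ((S * ∏ j, 2 * R j) * ∏ j, R j) := by
        rw [← hprod]; gcongr; exact Finset.prod_nonneg fun j _ => (hR j).le
    _ = n ^ n * S * (∏ j, R j) ^ 2 := by
        rw [Finset.prod_mul_distrib, Fin.prod_const]; field_simp

theorem pow_le_of_isAlekSuper (hn : 0 < n) (hu : ConvexOn ℝ Ω u) (hsuper : IsAlekSuper n q Ω u)
    (hAo : IsOpen A) (hAb : Bornology.IsBounded A) (hAΩ : A ⊆ Ω)
    (hu_cont : ContinuousOn u (closure A)) (hbd : ∀ y ∈ closure A \ A, 0 ≤ u y + ⟪g, y⟫ + b)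
    (hS : ∀ y ∈ A, |u y| ^ q ≤ S) (hz₀ : z₀ ∈ A) (hm : 0 < m) (hmz : u z₀ + ⟪g, z₀⟫ + b = -m)
    (hR : ∀ j, 0 < R j) (hwidth : ∀ y ∈ A, ∀ j, |L (y - z₀) j| ≤ R j) :
    m ^ n ≤ n ^ n * S * (∏ j, R j) ^ 2 := by
  have hr : ∀ j, 0 ≤ 2 * (m / (n * R j)) := fun j => by have := hR j; positivity
  have hR2 : ∀ j, 0 ≤ 2 * R j := fun j => (mul_pos two_pos (hR j)).le
  have hS0 : 0 ≤ S := (Real.rpow_nonneg (abs_nonneg _) q).trans (hS z₀ hz₀)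
  have hvol_slopes := volume_setOf_forall_abs_linearIsometryEquiv_sub_lt L (-g)
    fun j => m / (n * R j)
  have hvol_A := volume_setOf_forall_abs_linearIsometryEquiv_sub_le L z₀ R
  simp only [sub_neg_eq_add] at hvol_slopes
  refine pow_le_of_prod_le hn hR ?_
  rw [← ENNReal.ofReal_le_ofReal_iff (mul_nonneg hS0 (Finset.prod_nonneg fun j _ => hR2 j)),
    ENNReal.ofReal_mul hS0, ENNReal.ofReal_prod_of_nonneg fun j _ => hr j,
    ENNReal.ofReal_prod_of_nonneg fun j _ => hR2 j, ← hvol_slopes, ← hvol_A]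
  calc volume {p | ∀ j, |L (p + g) j| < m / (n * R j)} ≤ maMeasure n Ω u A :=
        measure_mono (setOf_abs_lt_subset_biUnion_subdiff L hn hu hAo hAb hAΩ hu_cont hbd hz₀ hmz
          hR hwidth)
    _ ≤ ∫⁻ x in A, ENNReal.ofReal (|u x| ^ q) := hsuper A hAΩ hAo.measurableSet
    _ ≤ ∫⁻ _ in A, ENNReal.ofReal S :=
        setLIntegral_mono measurable_const fun x hx => ENNReal.ofReal_le_ofReal (hS x hx)
    _ ≤ ENNReal.ofReal S * volume {p | ∀ j, |L (p - z₀) j| ≤ R j} := by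
        rw [setLIntegral_const]; gcongr; exact hwidth

end Aleksandrov

theorem neg_le_of_isAlekSuper {n : ℕ} (hn : 0 < n) {q D : ℝ} (hq0 : 0 ≤ q) (hqn : q < n)
    (hD : 0 < D) {Ω : Set (EuclideanSpace ℝ (Fin n))} {u : EuclideanSpace ℝ (Fin n) → ℝ}
    (hΩo : IsOpen Ω) (hΩb : Bornology.IsBounded Ω) (hdiam : Metric.diam Ω ≤ D)
    (hu : ConvexOn ℝ Ω u) (hu_cont : ContinuousOn u (closure Ω))
    (hfr : ∀ x ∈ frontier Ω, u x = 0) (hsuper : IsAlekSuper n q Ω u) :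
    ∀ y ∈ Ω, -u y ≤ (n ^ n * D ^ (2 * n)) ^ ((n : ℝ) - q)⁻¹ := by
  intro y hy
  have hX : (0 : ℝ) ≤ n ^ n * D ^ (2 * n) := by positivity
  by_cases hyneg : 0 ≤ u y
  · exact (neg_nonpos.2 hyneg).trans (Real.rpow_nonneg hX _)
  set A := Ω ∩ u ⁻¹' Iio 0
  have hAΩ : A ⊆ Ω := inter_subset_left
  have hAb : Bornology.IsBounded A := hΩb.subset hAΩ
  have hyA : y ∈ A := ⟨hy, not_le.1 hyneg⟩
  obtain ⟨z, hzcl, hmin⟩ := hAb.isCompact_closure.exists_isMinOn ⟨y, subset_closure hyA⟩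
    (hu_cont.mono (closure_mono hAΩ))
  have hzy : u z ≤ u y := hmin (subset_closure hyA)
  have hzA : z ∈ A := by
    rcases closure_eq_self_union_frontier Ω ▸ closure_mono hAΩ hzcl with hzΩ | hzfr
    · exact ⟨hzΩ, hzy.trans_lt hyA.2⟩
    · linarith [hfr z hzfr, hyA.2]
  have hbd : ∀ w ∈ closure A \ A, 0 ≤ u w + ⟪(0 : EuclideanSpace ℝ (Fin n)), w⟫ + 0 := by
    rintro w ⟨hwcl, hwA⟩
    rw [inner_zero_left, add_zero, add_zero]
    rcases closure_eq_self_union_frontier Ω ▸ closure_mono hAΩ hwcl with hwΩ | hwfr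
    · exact not_lt.1 fun h => hwA ⟨hwΩ, h⟩
    · exact (hfr w hwfr).ge
  have hS : ∀ w ∈ A, |u w| ^ q ≤ (-u z) ^ q := fun w hw => by
    rw [abs_of_neg hw.2]
    exact Real.rpow_le_rpow (neg_nonneg.2 hw.2.le) (neg_le_neg (hmin (subset_closure hw))) hq0
  have hwidth : ∀ w ∈ A, ∀ j, |LinearIsometryEquiv.refl ℝ _ (w - z) j| ≤ D := fun w hw j =>
    (PiLp.norm_apply_le _ j).trans <| (dist_eq_norm w z ▸ dist_le_diam_of_mem hΩb (hAΩ hw)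
      (hAΩ hzA)).trans hdiam
  have hm : 0 < -u z := neg_pos.2 hzA.2
  have key := pow_le_of_isAlekSuper (LinearIsometryEquiv.refl ℝ _) hn hu hsuper
    ((hu_cont.mono subset_closure).isOpen_inter_preimage hΩo isOpen_Iio) hAb hAΩ
    (hu_cont.mono (closure_mono hAΩ)) hbd hS hzA hm
    (by rw [inner_zero_left, add_zero, add_zero, neg_neg]) (fun _ => hD) hwidth
  rw [Fin.prod_const, ← pow_mul, mul_comm n 2] at key
  have hmq : 0 < (-u z) ^ q := Real.rpow_pos_of_pos hm q
  refine (neg_le_neg hzy).trans ((Real.le_rpow_inv_iff_of_pos hm.le hX (by linarith)).2 ?_)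
  rw [Real.rpow_sub hm, Real.rpow_natCast, div_le_iff₀ hmq]
  linarith

def coordSnoc {n : ℕ} (f : Fin (n - 1) → ℝ) (t : ℝ) : Fin n → ℝ :=
  fun j => if h : (j : ℕ) < n - 1 then f ⟨j, h⟩ else t

section LastCoordinate

variable {n : ℕ}

@[simp]
theorem coordSnoc_coordIdx (f : Fin (n - 1) → ℝ) (t : ℝ) (i : Fin (n - 1)) :
    coordSnoc f t (coordIdx n i) = f i := by
  simp [coordSnoc, coordIdx]

@[simp]
theorem coordSnoc_lastIdx (hn : 2 ≤ n) (f : Fin (n - 1) → ℝ) (t : ℝ) :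
    coordSnoc f t (lastIdx n hn) = t := by
  simp [coordSnoc, lastIdx]

theorem exists_coordIdx_or_eq_lastIdx (hn : 2 ≤ n) (j : Fin n) :
    (∃ i, j = coordIdx n i) ∨ j = lastIdx n hn := by
  by_cases h : (j : ℕ) < n - 1
  · exact Or.inl ⟨⟨j, h⟩, rfl⟩
  · exact Or.inr (Fin.ext (show (j : ℕ) = n - 1 by have := j.isLt; omega))

theorem prod_coordSnoc (hn : n ≠ 0) (f : Fin (n - 1) → ℝ) (t : ℝ) :
    ∏ j, coordSnoc f t j = (∏ i, f i) * t := by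
  obtain ⟨k, rfl⟩ : ∃ k, n = k + 1 := ⟨n - 1, by omega⟩
  rw [Fin.prod_univ_castSucc]
  congr 1
  · exact Finset.prod_congr rfl fun i _ => by simp [coordSnoc]
  · simp [coordSnoc]

theorem sq_prod_coordSnoc_eq {a η : Fin (n - 1) → ℝ} (hn : n ≠ 0) (hη : ∀ i, 0 < η i) {H : ℝ}
    (hH : 0 < H) :
    (∏ j, coordSnoc (fun i => 2 * (H / η i) ^ (a i)⁻¹) H j) ^ 2 =
      (2 ^ (n - 1) * ∏ i, (η i)⁻¹ ^ (a i)⁻¹) ^ 2 * H ^ (abar n a + 2) := by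
  have habar : abar n a = (∑ i, (a i)⁻¹) * 2 := by
    simp only [abar, Finset.sum_mul, div_eq_inv_mul]
  have hfac : ∀ i, 2 * (H / η i) ^ (a i)⁻¹ = 2 * (H ^ (a i)⁻¹ * (η i)⁻¹ ^ (a i)⁻¹) := fun i => by
    rw [div_eq_mul_inv, Real.mul_rpow hH.le (inv_pos.2 (hη i)).le]
  simp_rw [prod_coordSnoc hn, hfac, Finset.prod_mul_distrib, Fin.prod_const,
    ← Real.rpow_sum_of_pos hH, habar, Real.rpow_add hH, Real.rpow_mul hH.le, Real.rpow_two]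
  ring

end LastCoordinate

section ExteriorCondition

variable {n : ℕ} (hn : 2 ≤ n) {a η : Fin (n - 1) → ℝ} {x : EuclideanSpace ℝ (Fin n)}

theorem pos_of_mem_extSet (hη : ∀ i, 0 < η i) (hx : x ∈ extSet n hn a η) :
    0 < x (lastIdx n hn) :=
  lt_of_le_of_lt (Finset.sum_nonneg fun i _ => by have := hη i; positivity) hx

theorem abs_coordIdx_le_of_mem_extSet (ha : ∀ i, 0 < a i) (hη : ∀ i, 0 < η i)
    (hx : x ∈ extSet n hn a η) {H : ℝ} (hH : x (lastIdx n hn) ≤ H) (i : Fin (n - 1)) :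
    |x (coordIdx n i)| ≤ (H / η i) ^ (a i)⁻¹ := by
  have hH0 : 0 < H := (pos_of_mem_extSet hn hη hx).trans_le hH
  have hterm : η i * |x (coordIdx n i)| ^ a i < H :=
    ((Finset.single_le_sum (fun j _ => by have := hη j; positivity) (Finset.mem_univ i)).trans_lt
      hx).trans_le hH
  rw [Real.le_rpow_inv_iff_of_pos (abs_nonneg _) (div_pos hH0 (hη i)).le (ha i),
    le_div_iff₀' (hη i)]
  exact hterm.le

theorem abs_sub_le_coordSnoc_of_mem_extSet (ha : ∀ i, 0 < a i) (hη : ∀ i, 0 < η i)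
    {x y : EuclideanSpace ℝ (Fin n)} (hx : x ∈ extSet n hn a η) (hy : y ∈ extSet n hn a η)
    {H : ℝ} (hxH : x (lastIdx n hn) ≤ H) (hyH : y (lastIdx n hn) ≤ H) (j : Fin n) :
    |x j - y j| ≤ coordSnoc (fun i => 2 * (H / η i) ^ (a i)⁻¹) H j := by
  rcases exists_coordIdx_or_eq_lastIdx hn j with ⟨i, rfl⟩ | rfl
  · rw [coordSnoc_coordIdx, two_mul]
    exact (abs_sub _ _).trans (add_le_add (abs_coordIdx_le_of_mem_extSet hn ha hη hx hxH i)
      (abs_coordIdx_le_of_mem_extSet hn ha hη hy hyH i))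
  · rw [coordSnoc_lastIdx, abs_sub_le_iff]
    constructor <;> linarith [pos_of_mem_extSet hn hη hx, pos_of_mem_extSet hn hη hy]

end ExteriorCondition

theorem le_mul_rpow_of_pow_le {n : ℕ} (hn : n ≠ 0) {m X H γ : ℝ} (hm : 0 ≤ m) (hX : 0 ≤ X)
    (hH : 0 ≤ H) (h : m ^ n ≤ X * H ^ γ) : m ≤ X ^ (n : ℝ)⁻¹ * H ^ (γ / n) := by
  have hn' : (0 : ℝ) < n := Nat.cast_pos.2 (Nat.pos_of_ne_zero hn)
  rwa [div_eq_mul_inv, Real.rpow_mul hH, ← Real.mul_rpow hX (Real.rpow_nonneg hH γ),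
    Real.le_rpow_inv_iff_of_pos hm (by positivity) hn', Real.rpow_natCast]

theorem AffineIsometryEquiv.apply_eq_inner_add {ι : Type*} [Fintype ι] [DecidableEq ι]
    (T : EuclideanSpace ℝ ι ≃ᵃⁱ[ℝ] EuclideanSpace ℝ ι) (y : EuclideanSpace ℝ ι) (j : ι) :
    T y j = ⟪T.linearIsometryEquiv.symm (EuclideanSpace.single j 1), y⟫ + T 0 j := by
  have h := T.map_vsub y 0
  rw [vsub_eq_sub, vsub_eq_sub, sub_zero] at h
  rw [← T.linearIsometryEquiv.inner_map_map, LinearIsometryEquiv.apply_symm_apply,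
    EuclideanSpace.inner_single_left, h]
  simp

theorem nonneg_of_mem_closure_sublevel_diff {X : Type*} [TopologicalSpace X] {Ω : Set X}
    {u h : X → ℝ} {c H : ℝ} (hh : Continuous h) (hfr : ∀ x ∈ frontier Ω, u x = 0)
    (hh0 : ∀ y ∈ Ω, 0 ≤ h y) (hc : 0 ≤ c) (hHB : ∀ y ∈ Ω, h y ≤ H → -u y ≤ c * H) :
    ∀ w ∈ closure {y ∈ Ω | u y + c * h y < 0 ∧ h y < H} \
      {y ∈ Ω | u y + c * h y < 0 ∧ h y < H}, 0 ≤ u w + c * h w := by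
  rintro w ⟨hwcl, hwA⟩
  have hwH : h w ≤ H :=
    closure_minimal (fun y hy => hy.2.2.le) (isClosed_le hh continuous_const) hwcl
  have hwΩ : w ∈ closure Ω := closure_mono (fun y hy => hy.1) hwcl
  rcases closure_eq_self_union_frontier Ω ▸ hwΩ with hwΩ | hwfr
  · by_contra hneg
    have hwH' : h w = H := hwH.antisymm (not_lt.1 fun hlt => hwA ⟨hwΩ, not_le.1 hneg, hlt⟩)
    rw [hwH'] at hneg
    linarith [hHB w hwΩ hwH]
  · rw [hfr w hwfr, zero_add]
    exact mul_nonneg hc (closure_minimal hh0 (isClosed_le continuous_const hh) hwΩ)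

/-- Aleksandrov's estimate `m ^ n ≤ n ^ n M ^ q (∏ widths) ^ 2` for the box of widths
`2 (H / ηᵢ) ^ (1 / aᵢ)` and `H` gives `m ≤ decayStepConst n q a η M * H ^ ((ā + 2) / n)`. -/
def decayStepConst (n : ℕ) (q : ℝ) (a η : Fin (n - 1) → ℝ) (M : ℝ) : ℝ :=
  (n ^ n * M ^ q * (2 ^ (n - 1) * ∏ i, (η i)⁻¹ ^ (a i)⁻¹) ^ 2) ^ (n : ℝ)⁻¹

section HalvingStep

variable {n : ℕ} (hn : 2 ≤ n) {q M H : ℝ} {a η : Fin (n - 1) → ℝ}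
  {Ω : Set (EuclideanSpace ℝ (Fin n))} {u : EuclideanSpace ℝ (Fin n) → ℝ}
  {T : EuclideanSpace ℝ (Fin n) ≃ᵃⁱ[ℝ] EuclideanSpace ℝ (Fin n)}

theorem neg_add_mul_le_decayStepConst_mul_rpow (hq0 : 0 ≤ q) (ha : ∀ i, 0 < a i)
    (hη : ∀ i, 0 < η i) (hΩo : IsOpen Ω) (hΩb : Bornology.IsBounded Ω) (hu : ConvexOn ℝ Ω u)
    (hu_cont : ContinuousOn u (closure Ω)) (hfr : ∀ x ∈ frontier Ω, u x = 0)
    (hsuper : IsAlekSuper n q Ω u) (hT : MapsTo T Ω (extSet n hn a η))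
    (hM : ∀ y ∈ Ω, |u y| ≤ M) (hH : 0 < H) {c : ℝ} (hc : 0 ≤ c)
    (hHc : ∀ y ∈ Ω, T y (lastIdx n hn) ≤ H → -u y ≤ c * H) :
    ∀ y ∈ {y ∈ Ω | u y + c * T y (lastIdx n hn) < 0 ∧ T y (lastIdx n hn) < H},
      -(u y + c * T y (lastIdx n hn)) ≤ decayStepConst n q a η M * H ^ ((abar n a + 2) / n) := by
  set N := lastIdx n hn
  set A := {y ∈ Ω | u y + c * T y N < 0 ∧ T y N < H}
  intro y hyA
  have hTN : Continuous fun w => T w N := (EuclideanSpace.proj N).continuous.comp T.continuous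
  have hAo : IsOpen A := ((hu_cont.mono subset_closure).add (continuous_const.mul hTN).continuousOn
    |>.prodMk hTN.continuousOn).isOpen_inter_preimage hΩo (isOpen_Iio.prod isOpen_Iio)
  have hAΩ : A ⊆ Ω := fun w hw => hw.1
  set e := T.linearIsometryEquiv.symm (EuclideanSpace.single N 1)
  have hTc : ∀ w, u w + c * T w N = u w + ⟪c • e, w⟫ + c * T 0 N := fun w => by
    rw [T.apply_eq_inner_add, real_inner_smul_left]; ring
  have hbd : ∀ w ∈ closure A \ A, 0 ≤ u w + ⟪c • e, w⟫ + c * T 0 N := fun w hw =>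
    hTc w ▸ nonneg_of_mem_closure_sublevel_diff hTN hfr
      (fun w hw => (pos_of_mem_extSet hn hη (hT hw)).le) hc hHc w hw
  set R := coordSnoc (fun i => 2 * (H / η i) ^ (a i)⁻¹) H
  have hR : ∀ j, 0 < R j := fun j => by
    rcases exists_coordIdx_or_eq_lastIdx hn j with ⟨i, rfl⟩ | rfl
    · have := hη i; simp only [R, coordSnoc_coordIdx]; positivity
    · simpa only [R, coordSnoc_lastIdx] using hH
  have hwidth : ∀ w ∈ A, ∀ j, |T.linearIsometryEquiv (w - y) j| ≤ R j := fun w hw j => by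
    rw [← vsub_eq_sub, T.map_vsub, vsub_eq_sub]
    exact abs_sub_le_coordSnoc_of_mem_extSet hn ha hη (hT hw.1) (hT hyA.1) hw.2.2.le hyA.2.2.le j
  have key := pow_le_of_isAlekSuper T.linearIsometryEquiv (by omega) hu hsuper hAo
    (hΩb.subset hAΩ) hAΩ (hu_cont.mono (closure_mono hAΩ)) hbd
    (fun w hw => Real.rpow_le_rpow (abs_nonneg _) (hM w hw.1) hq0) hyA (neg_pos.2 hyA.2.1)
    (by rw [← hTc, neg_neg]) hR hwidth
  rw [sq_prod_coordSnoc_eq (by omega) hη hH, ← mul_assoc] at key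
  exact le_mul_rpow_of_pow_le (by omega) (neg_pos.2 hyA.2.1).le
    (by have := (abs_nonneg _).trans (hM y hyA.1); positivity) hH.le key

theorem neg_le_decayStepConst_mul_rpow_add_half (hq0 : 0 ≤ q) (ha : ∀ i, 0 < a i)
    (hη : ∀ i, 0 < η i) (hΩo : IsOpen Ω) (hΩb : Bornology.IsBounded Ω) (hu : ConvexOn ℝ Ω u)
    (hu_cont : ContinuousOn u (closure Ω)) (hfr : ∀ x ∈ frontier Ω, u x = 0)
    (hsuper : IsAlekSuper n q Ω u) (hT : MapsTo T Ω (extSet n hn a η))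
    (hM : ∀ y ∈ Ω, |u y| ≤ M) (hH : 0 < H) {B : ℝ} (hB : 0 ≤ B)
    (hHB : ∀ y ∈ Ω, T y (lastIdx n hn) ≤ H → -u y ≤ B) :
    ∀ y ∈ Ω, T y (lastIdx n hn) ≤ H / 2 →
      -u y ≤ decayStepConst n q a η M * H ^ ((abar n a + 2) / n) + B / 2 := by
  intro y hy hyH
  have hcH : B / H * H = B := div_mul_cancel₀ B hH.ne'
  have hcy : B / H * T y (lastIdx n hn) ≤ B / 2 := by
    calc B / H * T y (lastIdx n hn) ≤ B / H * (H / 2) := by gcongr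
      _ = B / 2 := by field_simp
  by_cases hyA : u y + B / H * T y (lastIdx n hn) < 0
  · linarith [neg_add_mul_le_decayStepConst_mul_rpow hn hq0 ha hη hΩo hΩb hu hu_cont hfr hsuper
      hT hM hH (div_nonneg hB hH.le) (by rwa [hcH]) y ⟨hy, hyA, by linarith⟩]
  · have : 0 ≤ M := (abs_nonneg _).trans (hM y hy)
    have : 0 ≤ decayStepConst n q a η M * H ^ ((abar n a + 2) / n) := by
      unfold decayStepConst; positivity
    linarith

end HalvingStep

theorem le_mul_rpow_of_halving {X : Type*} {s : Set X} {f h : X → ℝ} {M C D K γ : ℝ}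
    (hD : 0 < D) (hγ : 0 ≤ γ) (hK : 0 ≤ K) (hK_base : M ≤ K * (D / 2) ^ γ)
    (hK_step : (C + K / 2) * 2 ^ γ ≤ K) (hM : ∀ x ∈ s, f x ≤ M)
    (hstep : ∀ H > 0, ∀ B ≥ 0, (∀ x ∈ s, h x ≤ H → f x ≤ B) →
      ∀ x ∈ s, h x ≤ H / 2 → f x ≤ C * H ^ γ + B / 2) :
    ∀ H > 0, ∀ x ∈ s, h x ≤ H → f x ≤ K * H ^ γ := by
  have hdyadic : ∀ k : ℕ, ∀ H > 0, D / 2 ≤ 2 ^ k * H → ∀ x ∈ s, h x ≤ H → f x ≤ K * H ^ γ := by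
    intro k
    induction k with
    | zero =>
      intro H hH hDH x hx _
      rw [pow_zero, one_mul] at hDH
      have : 0 ≤ D / 2 := by positivity
      exact (hM x hx).trans (hK_base.trans (by gcongr))
    | succ k ih =>
      intro H hH hDH x hx hxH
      have h2H : 0 < 2 * H := by positivity
      have hbound := hstep (2 * H) h2H (K * (2 * H) ^ γ) (by positivity)
        (ih (2 * H) h2H (by rwa [pow_succ, mul_assoc] at hDH)) x hx (by linarith)
      calc f x ≤ C * (2 * H) ^ γ + K * (2 * H) ^ γ / 2 := hbound
        _ = (C + K / 2) * 2 ^ γ * H ^ γ := by rw [Real.mul_rpow zero_le_two hH.le]; ring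
        _ ≤ K * H ^ γ := by gcongr
  intro H hH
  obtain ⟨k, hk⟩ := pow_unbounded_of_one_lt (D / 2 / H) one_lt_two
  exact hdyadic k H hH ((div_lt_iff₀ hH).1 hk).le

theorem exists_halving_const (M C D γ : ℝ) (hD : 0 < D) (hγ : γ < 1) :
    ∃ K > 0, M ≤ K * (D / 2) ^ γ ∧ (C + K / 2) * 2 ^ γ ≤ K := by
  have hD2 : 0 < (D / 2) ^ γ := Real.rpow_pos_of_pos (by positivity) γ
  have h2γ : (2 : ℝ) ^ γ < 2 := by
    simpa using Real.rpow_lt_rpow_of_exponent_lt one_lt_two hγ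
  have hδ : 0 < 1 - (2 : ℝ) ^ γ / 2 := by linarith
  set K := max 1 (max (M / (D / 2) ^ γ) (C * 2 ^ γ / (1 - (2 : ℝ) ^ γ / 2)))
  refine ⟨K, zero_lt_one.trans_le (le_max_left _ _), ?_, ?_⟩
  · rw [← div_le_iff₀ hD2]
    exact (le_max_left _ _).trans (le_max_right _ _)
  · have h : C * 2 ^ γ ≤ K * (1 - 2 ^ γ / 2) := by
      rw [← div_le_iff₀ hδ]
      exact (le_max_right _ _).trans (le_max_right _ _)
    linarith

/-- Theorem 1.4 (1), case `n - ā - 2 > 0`. -/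
theorem boundary_estimate_alek_super_case1
    (n : ℕ) (hn : 2 ≤ n) (q : ℝ) (hq0 : 0 ≤ q) (hqn : q < n)
    (a η : Fin (n - 1) → ℝ) (ha : ∀ i, 1 ≤ a i) (hη : ∀ i, 0 < η i)
    (hcase : 0 < (n : ℝ) - abar n a - 2)
    (D : ℝ) (hD : 0 < D) :
    ∃ C > 0, ∀ (Ω : Set (EuclideanSpace ℝ (Fin n))) (u : EuclideanSpace ℝ (Fin n) → ℝ)
      (x₀ : EuclideanSpace ℝ (Fin n)),
      IsOpen Ω → Convex ℝ Ω → Bornology.IsBounded Ω → Metric.diam Ω ≤ D →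
      x₀ ∈ frontier Ω → ExtCondAt n hn a η Ω x₀ →
      ContinuousOn u (closure Ω) → ConvexOn ℝ Ω u →
      (∀ x ∈ frontier Ω, u x = 0) → IsAlekSuper n q Ω u →
      ∀ x ∈ Ω, Metric.infDist x (frontier Ω) = ‖x - x₀‖ →
        |u x| ≤ C * Metric.infDist x (frontier Ω) ^ ((abar n a + 2) / n) := by
  have ha' : ∀ i, 0 < a i := fun i => one_pos.trans_le (ha i)
  have hn' : (0 : ℝ) < n := by positivity
  have habar : 0 ≤ abar n a := Finset.sum_nonneg fun i _ => (div_pos two_pos (ha' i)).le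
  set M := ((n : ℝ) ^ n * D ^ (2 * n)) ^ ((n : ℝ) - q)⁻¹
  obtain ⟨K, hK, hK_base, hK_step⟩ := exists_halving_const M (decayStepConst n q a η M) D
    ((abar n a + 2) / n) hD (by rw [div_lt_one hn']; linarith)
  refine ⟨K, hK, fun Ω u x₀ hΩo _ hΩb hdiam hx₀ ⟨T, hT0, hT⟩ hu_cont hu hfr hsuper x hx hdist => ?_⟩
  have hT' : MapsTo T Ω (extSet n hn a η) := mapsTo_iff_image_subset.2 hT
  have hnonpos := hu.nonpos_of_eq_zero_on_frontier hΩo hΩb hx₀ hu_cont hfr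
  have hM : ∀ y ∈ Ω, |u y| ≤ M := fun y hy => by
    rw [abs_of_nonpos (hnonpos y hy)]
    exact neg_le_of_isAlekSuper (by omega) hq0 hqn hD hΩo hΩb hdiam hu hu_cont hfr hsuper y hy
  have hdecay := le_mul_rpow_of_halving (f := fun y => -u y) (h := fun y => T y (lastIdx n hn))
    hD (by positivity) hK.le hK_base hK_step (fun y hy => (neg_le_abs _).trans (hM y hy))
    fun H hH B hB hHB => neg_le_decayStepConst_mul_rpow_add_half hn hq0 ha' hη hΩo hΩb hu
      hu_cont hfr hsuper hT' hM hH hB hHB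
  have hTx : T x (lastIdx n hn) ≤ ‖x - x₀‖ := by
    rw [← dist_eq_norm, ← T.dist_map, hT0, dist_zero_right]
    exact (le_abs_self _).trans (Real.norm_eq_abs _ ▸ PiLp.norm_apply_le _ _)
  rw [hdist, abs_of_nonpos (hnonpos x hx)]
  exact hdecay _ ((pos_of_mem_extSet hn hη (hT' hx)).trans_le hTx) x hx hTx
end
end

section
/- Let n ≥ 2, a₁,…,a_{n−1} ≥ 1, η₁,…,η_{n−1} > 0, set ā = Σ_{i=1}^{n−1} 2/a_i, and let q satisfy 0 < n − 2 − ā ≤ q < n. Let Ω ⊂ ℝⁿ be a bounded convex domain with Ω ⊆ {x ∈ ℝⁿ : x_n > η₁|x₁|^{a₁} + ⋯ + η_{n−1}|x_{n−1}|^{a_{n−1}}}, and let u ∈ C(Ω̄) ∩ C^∞(Ω) be convex with det D²u = |u|^q in Ω, u = 0 on ∂Ω and u < 0 in Ω. Suppose that for some λ ∈ [(ā + 2)/n, 1) and some constant C_λ > 0 one has |u(x)| ≤ C_λ · x_n^λ for all x ∈ Ω. Then for every γ with λ < γ < min{(q/n)λ + (ā + 2)/n, 1} there exists a constant C_γ >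 0, depending only on n, q, a₁,…,a_{n−1}, η₁,…,η_{n−1}, diam Ω and C_λ, such that |u(x)| ≤ C_γ · x_n^γ for all x ∈ Ω. -/
open MeasureTheory Metric Set
open scoped RealInnerProductSpace ENNReal

noncomputable section

/-! ### Auxiliary material -/

section Aux

variable {m : ℕ}

lemma exists_min_interior (Ω' : Set (EuclideanSpace ℝ (Fin m))) (hO : IsOpen Ω')
    (hb : Bornology.IsBounded Ω') (φ : EuclideanSpace ℝ (Fin m) → ℝ)
    (hφc : ContinuousOn φ (closure Ω')) (x : EuclideanSpace ℝ (Fin m)) (hx : x ∈ Ω')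
    (hfr : ∀ y ∈ frontier Ω', φ x < φ y) :
    ∃ z ∈ Ω', IsLocalMin φ z := by
  have hcpt : IsCompact (closure Ω') := hb.isCompact_closure
  obtain ⟨z, hz, hmin⟩ := hcpt.exists_isMinOn ⟨x, subset_closure hx⟩ hφc
  have hzΩ : z ∈ Ω' := by
    by_contra hzn
    have hzf : z ∈ frontier Ω' := by
      rw [hO.frontier_eq]; exact ⟨hz, hzn⟩
    exact absurd (hmin (subset_closure hx)) (not_le.2 (hfr z hzf))
  exact ⟨z, hzΩ, hmin.isLocalMin (Filter.mem_of_superset (hO.mem_nhds hzΩ) subset_closure)⟩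

/-- The continuous linear map sending a functional to the vector of its values on the basis. -/
def dualVec (m : ℕ) : ((EuclideanSpace ℝ (Fin m)) →L[ℝ] ℝ) →L[ℝ] EuclideanSpace ℝ (Fin m) :=
  ((PiLp.continuousLinearEquiv 2 ℝ (fun _ : Fin m => ℝ)).symm :
      ((Fin m) → ℝ) →L[ℝ] EuclideanSpace ℝ (Fin m)).comp
    (ContinuousLinearMap.pi fun i =>
      (ContinuousLinearMap.apply ℝ ℝ (EuclideanSpace.single i (1:ℝ))))

lemma dualVec_apply (ℓ : (EuclideanSpace ℝ (Fin m)) →L[ℝ] ℝ) (i : Fin m) :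
    (dualVec m ℓ) i = ℓ (EuclideanSpace.single i 1) := rfl

/-- The shifted gradient map of `u`. -/
def gradMap (u : EuclideanSpace ℝ (Fin m) → ℝ) (w₀ : EuclideanSpace ℝ (Fin m))
    (z : EuclideanSpace ℝ (Fin m)) : EuclideanSpace ℝ (Fin m) :=
  dualVec m (fderiv ℝ u z) + w₀

lemma mem_image_gradMap (Ω' : Set (EuclideanSpace ℝ (Fin m))) (hO : IsOpen Ω')
    (hb : Bornology.IsBounded Ω') (u : EuclideanSpace ℝ (Fin m) → ℝ)
    (hφc : ContinuousOn u (closure Ω'))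
    (hdu : ∀ z ∈ Ω', DifferentiableAt ℝ u z)
    (w₀ p x : EuclideanSpace ℝ (Fin m)) (hx : x ∈ Ω')
    (hfr : ∀ y ∈ frontier Ω', 0 ≤ u y + ⟪w₀, y⟫)
    (hp : ∀ y ∈ closure Ω', ⟪p, y - x⟫ < -(u x + ⟪w₀, x⟫)) :
    p ∈ gradMap u w₀ '' Ω' := by
  set φ : EuclideanSpace ℝ (Fin m) → ℝ := fun y => u y + ⟪w₀ - p, y⟫ with hφdef
  have hφcont : ContinuousOn φ (closure Ω') :=
    hφc.add ((continuous_const.inner continuous_id).continuousOn)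
  have hfr' : ∀ y ∈ frontier Ω', φ x < φ y := by
    intro y hy
    have h1 : 0 ≤ u y + ⟪w₀, y⟫ := hfr y hy
    have h2 : ⟪p, y - x⟫ < -(u x + ⟪w₀, x⟫) := hp y (frontier_subset_closure hy)
    have e1 : ⟪w₀ - p, y⟫ = ⟪w₀, y⟫ - ⟪p, y⟫ := inner_sub_left _ _ _
    have e2 : ⟪w₀ - p, x⟫ = ⟪w₀, x⟫ - ⟪p, x⟫ := inner_sub_left _ _ _
    have e3 : ⟪p, y - x⟫ = ⟪p, y⟫ - ⟪p, x⟫ := inner_sub_right _ _ _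
    simp only [hφdef, e1, e2]
    nlinarith [h1, h2, e3]
  obtain ⟨z, hzΩ, hzmin⟩ := exists_min_interior Ω' hO hb φ hφcont x hx hfr'
  have hder0 : fderiv ℝ φ z = 0 := hzmin.fderiv_eq_zero
  have hderφ : fderiv ℝ φ z = fderiv ℝ u z + innerSL ℝ (w₀ - p) := by
    have h1 : HasFDerivAt u (fderiv ℝ u z) z := (hdu z hzΩ).hasFDerivAt
    have h2 : HasFDerivAt (fun y : EuclideanSpace ℝ (Fin m) => ⟪w₀ - p, y⟫)
        (innerSL ℝ (w₀ - p)) z := (innerSL ℝ (w₀ - p)).hasFDerivAt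
    exact (h1.add h2).fderiv
  have hkey : fderiv ℝ u z = innerSL ℝ (p - w₀) := by
    have h0 : fderiv ℝ u z + innerSL ℝ (w₀ - p) = 0 := hderφ ▸ hder0
    have h1 : fderiv ℝ u z = -(innerSL ℝ (w₀ - p)) := eq_neg_of_add_eq_zero_left h0
    ext w
    rw [h1]
    simp only [ContinuousLinearMap.neg_apply, innerSL_apply_apply]
    rw [inner_sub_left, inner_sub_left]
    ring
  refine ⟨z, hzΩ, ?_⟩
  have hco : ∀ i, gradMap u w₀ z i = p i := by
    intro i
    have : (dualVec m (fderiv ℝ u z)) i = ⟪p - w₀, EuclideanSpace.single i 1⟫ := by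
      rw [dualVec_apply, hkey]; rfl
    rw [EuclideanSpace.inner_single_right] at this
    have : (dualVec m (fderiv ℝ u z)) i = p i - w₀ i := by
      simpa [PiLp.sub_apply] using this
    simp only [gradMap, PiLp.add_apply, this]
    ring
  ext i
  exact hco i

lemma det_eq_hessDet (u : EuclideanSpace ℝ (Fin m) → ℝ) (z : EuclideanSpace ℝ (Fin m)) :
    ((dualVec m).comp (fderiv ℝ (fderiv ℝ u) z)).det = hessDet m u z := by
  set L := (dualVec m).comp (fderiv ℝ (fderiv ℝ u) z) with hL
  have hdet : L.det = LinearMap.det (L : EuclideanSpace ℝ (Fin m) →ₗ[ℝ] EuclideanSpace ℝ (Fin m)) :=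
    rfl
  rw [hdet, ← LinearMap.det_toMatrix (EuclideanSpace.basisFun (Fin m) ℝ).toBasis, hessDet,
    ← Matrix.det_transpose]
  congr 1
  ext i j
  rw [Matrix.transpose_apply, LinearMap.toMatrix_apply]
  simp only [OrthonormalBasis.coe_toBasis, OrthonormalBasis.coe_toBasis_repr_apply,
    EuclideanSpace.basisFun_apply, EuclideanSpace.basisFun_repr, Matrix.of_apply]
  rw [iteratedFDeriv_two_apply]
  simp only [Matrix.cons_val_zero, Matrix.cons_val_one, Matrix.head_cons]
  exact dualVec_apply _ _

lemma volume_image_gradMap_le (Ω : Set (EuclideanSpace ℝ (Fin m))) (hΩ : IsOpen Ω)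
    (u : EuclideanSpace ℝ (Fin m) → ℝ)
    (hu : ContDiffOn ℝ (⊤ : ℕ∞) u Ω) (w₀ : EuclideanSpace ℝ (Fin m))
    (Ω' : Set (EuclideanSpace ℝ (Fin m))) (hsub : Ω' ⊆ Ω)
    (hmeas : MeasurableSet Ω') :
    volume (gradMap u w₀ '' Ω') ≤ ∫⁻ z in Ω', ENNReal.ofReal |hessDet m u z| := by
  have hfd : ∀ z ∈ Ω', HasFDerivWithinAt (gradMap u w₀)
      ((dualVec m).comp (fderiv ℝ (fderiv ℝ u) z)) Ω' z := by
    intro z hz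
    have hu2 : ContDiffAt ℝ 2 u z := (hu.contDiffAt (hΩ.mem_nhds (hsub hz))).of_le (WithTop.coe_le_coe.mpr le_top)
    have hfd1 : HasFDerivAt (fderiv ℝ u) (fderiv ℝ (fderiv ℝ u) z) z := by
      have : ContDiffAt ℝ 1 (fderiv ℝ u) z := hu2.fderiv_right (le_refl _)
      exact (this.differentiableAt one_ne_zero).hasFDerivAt
    have : HasFDerivAt (fun y => dualVec m (fderiv ℝ u y) + w₀)
        ((dualVec m).comp (fderiv ℝ (fderiv ℝ u) z)) z :=
      (((dualVec m).hasFDerivAt.comp z hfd1).add_const w₀)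
    exact this.hasFDerivWithinAt
  calc volume (gradMap u w₀ '' Ω')
      ≤ ∫⁻ z in Ω', ENNReal.ofReal |((dualVec m).comp (fderiv ℝ (fderiv ℝ u) z)).det| :=
        addHaar_image_le_lintegral_abs_det_fderiv volume hmeas hfd
    _ = ∫⁻ z in Ω', ENNReal.ofReal |hessDet m u z| := by
        congr 1
        ext z
        rw [det_eq_hessDet]

lemma volume_openBox (d : Fin m → ℝ) :
    volume {p : EuclideanSpace ℝ (Fin m) | ∀ j, |p j| < d j} = ∏ j, ENNReal.ofReal (2 * d j) := by
  have h : {p : EuclideanSpace ℝ (Fin m) | ∀ j, |p j| < d j}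
      = (MeasurableEquiv.toLp 2 (Fin m → ℝ)).symm ⁻¹'
        (Set.pi Set.univ fun j => Set.Ioo (-(d j)) (d j)) := by
    ext p
    simp [MeasurableEquiv.coe_toLp_symm, abs_lt, Set.mem_pi, and_comm]
  rw [h, MeasurePreserving.measure_preimage (EuclideanSpace.volume_preserving_symm_measurableEquiv_toLp _)]
  · rw [volume_pi_pi]
    congr 1
    ext j
    rw [Real.volume_Ioo]
    congr 1
    ring
  · exact (MeasurableSet.univ_pi fun j => measurableSet_Ioo).nullMeasurableSet

lemma volume_le_closedBox (S : Set (EuclideanSpace ℝ (Fin m))) (lo hi : Fin m → ℝ)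
    (hS : ∀ y ∈ S, ∀ j, y j ∈ Set.Icc (lo j) (hi j)) :
    volume S ≤ ∏ j, ENNReal.ofReal (hi j - lo j) := by
  have h : S ⊆ (MeasurableEquiv.toLp 2 (Fin m → ℝ)).symm ⁻¹'
      (Set.pi Set.univ fun j => Set.Icc (lo j) (hi j)) := by
    intro y hy
    simp only [Set.mem_preimage, Set.mem_pi, Set.mem_univ, forall_true_left]
    intro j
    exact hS y hy j
  refine le_trans (measure_mono h) ?_
  rw [MeasurePreserving.measure_preimage (EuclideanSpace.volume_preserving_symm_measurableEquiv_toLp _)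
    ((MeasurableSet.univ_pi fun j => measurableSet_Icc).nullMeasurableSet)]
  rw [volume_pi_pi]
  refine le_of_eq ?_
  congr 1
  ext j
  rw [Real.volume_Icc]

end Aux


section Geom

lemma extSet_sum_nonneg (n : ℕ) (hn : 2 ≤ n) (a η : Fin (n - 1) → ℝ) (hη : ∀ i, 0 < η i)
    (x : EuclideanSpace ℝ (Fin n)) :
    0 ≤ ∑ i, η i * |x (coordIdx n i)| ^ a i :=
  Finset.sum_nonneg fun i _ =>
    mul_nonneg (hη i).le (Real.rpow_nonneg (abs_nonneg _) _)

lemma extSet_last_pos (n : ℕ) (hn : 2 ≤ n) (a η : Fin (n - 1) → ℝ) (hη : ∀ i, 0 < η i)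
    {x : EuclideanSpace ℝ (Fin n)} (hx : x ∈ extSet n hn a η) :
    0 < x (lastIdx n hn) :=
  lt_of_le_of_lt (extSet_sum_nonneg n hn a η hη x) hx

lemma extSet_coord_bound (n : ℕ) (hn : 2 ≤ n) (a η : Fin (n - 1) → ℝ)
    (ha : ∀ i, 1 ≤ a i) (hη : ∀ i, 0 < η i)
    {x : EuclideanSpace ℝ (Fin n)} (hx : x ∈ extSet n hn a η) {t : ℝ}
    (hxt : x (lastIdx n hn) ≤ t) (i : Fin (n - 1)) :
    |x (coordIdx n i)| ≤ (t / η i) ^ (1 / a i) := by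
  have hai : 0 < a i := lt_of_lt_of_le one_pos (ha i)
  have hterm : η i * |x (coordIdx n i)| ^ a i ≤ ∑ j, η j * |x (coordIdx n j)| ^ a j :=
    Finset.single_le_sum (f := fun j => η j * |x (coordIdx n j)| ^ a j)
      (fun j _ => mul_nonneg (hη j).le (Real.rpow_nonneg (abs_nonneg _) _))
      (Finset.mem_univ i)
  have h1 : |x (coordIdx n i)| ^ a i ≤ t / η i := by
    rw [le_div_iff₀ (hη i)]
    calc |x (coordIdx n i)| ^ a i * η i = η i * |x (coordIdx n i)| ^ a i := by ring
      _ ≤ ∑ j, η j * |x (coordIdx n j)| ^ a j := hterm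
      _ ≤ x (lastIdx n hn) := le_of_lt hx
      _ ≤ t := hxt
  have h2 := Real.rpow_le_rpow (Real.rpow_nonneg (abs_nonneg _) _) h1
    (le_of_lt (by positivity : (0:ℝ) < 1 / a i))
  rwa [← Real.rpow_mul (abs_nonneg _), mul_one_div, div_self hai.ne', Real.rpow_one] at h2

lemma prod_dite_fin (n : ℕ) (hn : 2 ≤ n) (f : Fin (n-1) → ℝ) (t : ℝ) :
    (∏ j : Fin n, (if h : (j:ℕ) < n - 1 then f ⟨(j:ℕ), h⟩ else t)) = (∏ i, f i) * t := by
  obtain ⟨n', rfl⟩ : ∃ n', n = n' + 1 := ⟨n - 1, by omega⟩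
  rw [Fin.prod_univ_castSucc]
  congr 1
  · apply Finset.prod_congr rfl
    intro i _
    rw [dif_pos (show ((Fin.castSucc i : Fin (n'+1)) : ℕ) < n' + 1 - 1 from i.isLt)]
    exact congrArg f (Fin.ext rfl)
  · rw [dif_neg]
    simp [Fin.last]

end Geom


section KeyStep

/-- The key one-scale estimate coming from the Monge–Ampère measure bound. -/
lemma key_step (n : ℕ) (hn : 2 ≤ n) (a η : Fin (n - 1) → ℝ) (ha : ∀ i, 1 ≤ a i)
    (hη : ∀ i, 0 < η i) (q lam γ : ℝ) (hq : 0 < q) (hlam : 0 < lam) (hγ : 0 < γ)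
    (Clam : ℝ) (hClam : 0 < Clam) :
    ∃ Cs > 0, ∀ (Ω : Set (EuclideanSpace ℝ (Fin n))) (u : EuclideanSpace ℝ (Fin n) → ℝ),
      IsOpen Ω → Bornology.IsBounded Ω → Ω ⊆ extSet n hn a η →
      ContinuousOn u (closure Ω) → ContDiffOn ℝ (⊤ : ℕ∞) u Ω →
      (∀ x ∈ Ω, hessDet n u x = |u x| ^ q) →
      (∀ x ∈ frontier Ω, u x = 0) →
      (∀ x ∈ Ω, |u x| ≤ Clam * x (lastIdx n hn) ^ lam) →
      ∀ A B : ℝ, 0 ≤ A → 0 ≤ B →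
      (∀ y ∈ Ω, -u y ≤ A * y (lastIdx n hn) ^ lam + B * y (lastIdx n hn) ^ γ) →
      ∀ x ∈ Ω, ∀ t : ℝ, x (lastIdx n hn) < t →
      -u x ≤ (A * t ^ lam + B * t ^ γ) * (x (lastIdx n hn) / t)
        + Cs * t ^ ((lam * q + abar n a + 2) / n) := by
  have hnn : 0 < n := by omega
  have hn0 : (0:ℝ) < n := by exact_mod_cast hnn
  have hai_pos : ∀ i, 0 < a i := fun i => lt_of_lt_of_le one_pos (ha i)
  set l := lastIdx n hn with hl
  set sb : ℝ := ∑ i, 1 / a i with hsb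
  have habar : abar n a = 2 * sb := by
    rw [abar, hsb, Finset.mul_sum]
    congr 1; ext i; rw [div_eq_mul_one_div]
  set K₂ : ℝ := ∏ i, ((η i) ^ (1 / a i))⁻¹ with hK₂def
  have hK₂ : 0 < K₂ :=
    Finset.prod_pos fun i _ => inv_pos.2 (Real.rpow_pos_of_pos (hη i) _)
  set C₀ : ℝ := ((n:ℝ)/2)^n * ((2:ℝ)^(n-1) * K₂)^2 * Clam ^ q with hC₀def
  have hC₀ : 0 < C₀ := by
    have h1 : (0:ℝ) < ((n:ℝ)/2)^n := by positivity
    have h2 : (0:ℝ) < ((2:ℝ)^(n-1) * K₂)^2 := by positivity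
    have h3 : (0:ℝ) < Clam ^ q := Real.rpow_pos_of_pos hClam q
    positivity
  set β : ℝ := (lam * q + abar n a + 2) / n with hβdef
  refine ⟨C₀ ^ ((1:ℝ)/n), Real.rpow_pos_of_pos hC₀ _, ?_⟩
  intro Ω u hopen hbdd hext hcont hsmooth hpde hfr0 hClamB A B hA hB hinv x hx t hxt
  have hxl_pos : 0 < x l := extSet_last_pos n hn a η hη (hext hx)
  have ht0 : 0 < t := hxl_pos.trans hxt
  have hCs_pos : (0:ℝ) < C₀ ^ ((1:ℝ)/n) * t ^ β :=
    mul_pos (Real.rpow_pos_of_pos hC₀ _) (Real.rpow_pos_of_pos ht0 _)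
  -- the truncated domain
  set V : Set (EuclideanSpace ℝ (Fin n)) := {y | y l < t} with hVdef
  have hVopen : IsOpen V := isOpen_Iio.preimage (EuclideanSpace.proj l).continuous
  set Ω' : Set (EuclideanSpace ℝ (Fin n)) := Ω ∩ V with hΩ'def
  have hopen' : IsOpen Ω' := hopen.inter hVopen
  have hbdd' : Bornology.IsBounded Ω' := hbdd.subset Set.inter_subset_left
  have hxΩ' : x ∈ Ω' := ⟨hx, hxt⟩
  have hsub' : Ω' ⊆ Ω := Set.inter_subset_left
  -- the tilt
  set M : ℝ := A * t ^ lam + B * t ^ γ with hMdef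
  have hM0 : 0 ≤ M :=
    add_nonneg (mul_nonneg hA (Real.rpow_nonneg ht0.le _))
      (mul_nonneg hB (Real.rpow_nonneg ht0.le _))
  set w₀ : EuclideanSpace ℝ (Fin n) := (M / t) • (EuclideanSpace.single l (1:ℝ)) with hw₀def
  have hw₀ : ∀ y : EuclideanSpace ℝ (Fin n), ⟪w₀, y⟫ = (M / t) * y l := by
    intro y
    rw [hw₀def, real_inner_smul_left, EuclideanSpace.inner_single_left]
    simp
  set m₀ : ℝ := -(u x + ⟪w₀, x⟫) with hm₀def
  by_cases hm₀sgn : m₀ ≤ 0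
  · -- trivial case
    have h1 : -u x ≤ (M / t) * x l := by
      have := hm₀sgn
      rw [hm₀def] at this
      rw [← hw₀ x]
      linarith
    have h2 : (M / t) * x l = M * (x l / t) := by ring
    nlinarith [hCs_pos]
  push_neg at hm₀sgn
  -- the coordinate widths
  set c : Fin n → ℝ :=
    fun j => if h : (j:ℕ) < n - 1 then 2 * (t / η ⟨j, h⟩) ^ (1 / a ⟨j, h⟩) else t with hcdef
  have hc_pos : ∀ j, 0 < c j := by
    intro j
    simp only [hcdef]
    split
    · rename_i hj
      have h1 : (0:ℝ) < (t / η ⟨(j:ℕ), hj⟩) ^ (1 / a ⟨(j:ℕ), hj⟩) :=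
        Real.rpow_pos_of_pos (div_pos ht0 (hη _)) _
      linarith
    · exact ht0
  -- closure bounds
  have hclbnd : ∀ y ∈ closure Ω',
      (∀ i : Fin (n-1), |y (coordIdx n i)| ≤ (t / η i) ^ (1 / a i)) ∧ 0 ≤ y l ∧ y l ≤ t := by
    have hcl1 : IsClosed {y : EuclideanSpace ℝ (Fin n) |
        ∀ i : Fin (n-1), |y (coordIdx n i)| ≤ (t / η i) ^ (1 / a i)} := by
      have he : {y : EuclideanSpace ℝ (Fin n) |
            ∀ i : Fin (n-1), |y (coordIdx n i)| ≤ (t / η i) ^ (1 / a i)}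
            = ⋂ i : Fin (n-1), {y : EuclideanSpace ℝ (Fin n) |
              |y (coordIdx n i)| ≤ (t / η i) ^ (1 / a i)} := by
        ext y; simp
      rw [he]
      refine isClosed_iInter fun i => ?_
      exact isClosed_Iic.preimage ((EuclideanSpace.proj (coordIdx n i)).continuous.abs)
    have hcl2 : IsClosed {y : EuclideanSpace ℝ (Fin n) | 0 ≤ y l ∧ y l ≤ t} :=
      IsClosed.inter
        (isClosed_Ici.preimage (EuclideanSpace.proj l).continuous)
        (isClosed_Iic.preimage (EuclideanSpace.proj l).continuous)
    have hclosed : IsClosed {y : EuclideanSpace ℝ (Fin n) |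
        (∀ i : Fin (n-1), |y (coordIdx n i)| ≤ (t / η i) ^ (1 / a i)) ∧ 0 ≤ y l ∧ y l ≤ t} :=
      hcl1.inter hcl2
    intro y hy
    refine closure_minimal ?_ hclosed hy
    intro z hz
    refine ⟨fun i => extSet_coord_bound n hn a η ha hη (hext hz.1) (le_of_lt hz.2) i,
      (extSet_last_pos n hn a η hη (hext hz.1)).le, le_of_lt hz.2⟩
  have hxbnd := hclbnd x (subset_closure hxΩ')
  have hdistb : ∀ y ∈ closure Ω', ∀ j, |y j - x j| ≤ c j := by
    intro y hy j
    have hybnd := hclbnd y hy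
    simp only [hcdef]
    split
    · rename_i hj
      have h1 : |y j| ≤ (t / η ⟨(j:ℕ), hj⟩) ^ (1 / a ⟨(j:ℕ), hj⟩) := hybnd.1 ⟨(j:ℕ), hj⟩
      have h2 : |x j| ≤ (t / η ⟨(j:ℕ), hj⟩) ^ (1 / a ⟨(j:ℕ), hj⟩) := hxbnd.1 ⟨(j:ℕ), hj⟩
      have h3 : |y j - x j| ≤ |y j| + |x j| := abs_sub _ _
      linarith
    · rename_i hj
      have hjl : j = l := by
        have h2 := j.isLt
        rw [hl]
        exact Fin.ext (by simp [lastIdx]; omega)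
      rw [hjl]
      rw [abs_le]
      constructor
      · linarith [hybnd.2.1, hxbnd.2.2]
      · linarith [hybnd.2.2, hxbnd.2.1]
  -- differentiability inside
  have hdiff : ∀ z ∈ Ω', DifferentiableAt ℝ u z := fun z hz =>
    (hsmooth.contDiffAt (hopen.mem_nhds (hsub' hz))).differentiableAt (by simp)
  -- frontier sign condition
  have hfrΩ' : ∀ y ∈ frontier Ω', 0 ≤ u y + ⟪w₀, y⟫ := by
    intro y hy
    have hycl : y ∈ closure Ω' := frontier_subset_closure hy
    have hybnd := hclbnd y hycl
    have hynot : y ∉ Ω' := by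
      rw [hopen'.frontier_eq] at hy
      exact hy.2
    rw [hw₀]
    by_cases hyΩ : y ∈ Ω
    · have hyl : y l = t := by
        have : ¬ (y l < t) := fun hlt => hynot ⟨hyΩ, hlt⟩
        exact le_antisymm hybnd.2.2 (not_lt.1 this)
      have hiy := hinv y hyΩ
      rw [hyl] at hiy ⊢
      rw [div_mul_cancel₀ _ ht0.ne']
      rw [← hMdef] at hiy
      linarith
    · have hyfr : y ∈ frontier Ω := by
        rw [hopen.frontier_eq]
        exact ⟨closure_mono hsub' hycl, hyΩ⟩
      rw [hfr0 y hyfr]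
      have : 0 ≤ (M / t) * y l := mul_nonneg (div_nonneg hM0 ht0.le) hybnd.2.1
      linarith
  -- the box of subgradients
  set d : Fin n → ℝ := fun j => m₀ / ((n:ℝ) * c j) with hddef
  have hd_pos : ∀ j, 0 < d j := fun j => div_pos hm₀sgn (mul_pos hn0 (hc_pos j))
  have hBox : {p : EuclideanSpace ℝ (Fin n) | ∀ j, |p j| < d j} ⊆ gradMap u w₀ '' Ω' := by
    intro p hp
    refine mem_image_gradMap Ω' hopen' hbdd' u
      (hcont.mono (closure_mono hsub')) hdiff w₀ p x hxΩ' hfrΩ' ?_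
    intro y hy
    have h1 : ⟪p, y - x⟫ ≤ ∑ j, |p j| * |y j - x j| := by
      have he : ⟪p, y - x⟫ = ∑ j, p j * (y - x) j := by
        simp [PiLp.inner_apply, RCLike.inner_apply]
        exact Finset.sum_congr rfl fun j _ => mul_comm _ _
      rw [he]
      refine Finset.sum_le_sum fun j _ => ?_
      calc p j * (y - x) j ≤ |p j * (y - x) j| := le_abs_self _
        _ = |p j| * |(y : EuclideanSpace ℝ (Fin n)) j - x j| := by
            rw [abs_mul]
            simp [PiLp.sub_apply]
    have h2 : ∀ j, |p j| * |y j - x j| < m₀ / n := by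
      intro j
      have hb1 : |p j| * |y j - x j| ≤ |p j| * c j :=
        mul_le_mul_of_nonneg_left (hdistb y hy j) (abs_nonneg _)
      have hb2 : |p j| * c j < d j * c j :=
        mul_lt_mul_of_pos_right (hp j) (hc_pos j)
      have hb3 : d j * c j = m₀ / n := by
        simp only [hddef]
        field_simp [(hc_pos j).ne', hn0.ne']
      linarith
    have h3 : ∑ _j : Fin n, (m₀ / n : ℝ) = m₀ := by
      rw [Finset.sum_const, Finset.card_univ, Fintype.card_fin, nsmul_eq_mul, mul_comm]
      exact div_mul_cancel₀ _ hn0.ne'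
    have h4 : (∑ j, |p j| * |y j - x j|) < ∑ _j : Fin n, (m₀ / n : ℝ) := by
      refine Finset.sum_lt_sum_of_nonempty ?_ fun j _ => h2 j
      have : Nonempty (Fin n) := ⟨⟨0, hnn⟩⟩
      exact Finset.univ_nonempty
    rw [← hm₀def]
    calc ⟪p, y - x⟫ ≤ ∑ j, |p j| * |y j - x j| := h1
      _ < ∑ _j : Fin n, (m₀ / n : ℝ) := h4
      _ = m₀ := h3
  -- volume chain
  have hΩ'meas : MeasurableSet Ω' := hopen'.measurableSet
  have hvol1 : (∏ j, ENNReal.ofReal (2 * d j)) ≤ ∫⁻ z in Ω', ENNReal.ofReal |hessDet n u z| := by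
    rw [← volume_openBox d]
    exact (measure_mono hBox).trans
      (volume_image_gradMap_le Ω hopen u hsmooth w₀ Ω' hsub' hΩ'meas)
  have hint : ∫⁻ z in Ω', ENNReal.ofReal |hessDet n u z|
      ≤ ENNReal.ofReal (Clam ^ q * t ^ (lam * q)) * volume Ω' := by
    have hptw : ∀ z ∈ Ω', ENNReal.ofReal |hessDet n u z|
        ≤ ENNReal.ofReal (Clam ^ q * t ^ (lam * q)) := by
      intro z hz
      apply ENNReal.ofReal_le_ofReal
      rw [hpde z hz.1, abs_of_nonneg (Real.rpow_nonneg (abs_nonneg _) q)]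
      have hz0 : 0 < z l := extSet_last_pos n hn a η hη (hext hz.1)
      have hb1 : |u z| ≤ Clam * t ^ lam := by
        refine (hClamB z hz.1).trans ?_
        exact mul_le_mul_of_nonneg_left
          (Real.rpow_le_rpow hz0.le (le_of_lt hz.2) hlam.le) hClam.le
      calc |u z| ^ q ≤ (Clam * t ^ lam) ^ q :=
            Real.rpow_le_rpow (abs_nonneg _) hb1 hq.le
        _ = Clam ^ q * t ^ (lam * q) := by
            rw [Real.mul_rpow hClam.le (Real.rpow_nonneg ht0.le _),
              ← Real.rpow_mul ht0.le]
    calc ∫⁻ z in Ω', ENNReal.ofReal |hessDet n u z|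
        ≤ ∫⁻ _z in Ω', ENNReal.ofReal (Clam ^ q * t ^ (lam * q)) :=
          setLIntegral_mono measurable_const hptw
      _ = ENNReal.ofReal (Clam ^ q * t ^ (lam * q)) * volume Ω' := by
          rw [setLIntegral_const]
  have hvolΩ' : volume Ω' ≤ ∏ j, ENNReal.ofReal (c j) := by
    have h := volume_le_closedBox Ω'
      (fun j => if h : (j:ℕ) < n - 1 then -((t / η ⟨j, h⟩) ^ (1 / a ⟨j, h⟩)) else 0)
      (fun j => if h : (j:ℕ) < n - 1 then (t / η ⟨j, h⟩) ^ (1 / a ⟨j, h⟩) else t) ?_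
    · refine h.trans (le_of_eq ?_)
      congr 1
      ext j
      simp only [hcdef]
      split
      · congr 1; ring
      · rw [sub_zero]
    · intro y hy j
      have hybnd := hclbnd y (subset_closure hy)
      dsimp only
      split
      · rename_i hj
        have h1 : |y j| ≤ (t / η ⟨(j:ℕ), hj⟩) ^ (1 / a ⟨(j:ℕ), hj⟩) := hybnd.1 ⟨(j:ℕ), hj⟩
        rw [abs_le] at h1
        exact ⟨h1.1, h1.2⟩
      · rename_i hj
        have hjl : j = l := by
          have h2 := j.isLt
          rw [hl]
          exact Fin.ext (by simp [lastIdx]; omega)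
        rw [hjl]
        exact ⟨hybnd.2.1, hybnd.2.2⟩
  -- to a real inequality
  have hreal : ∏ j, (2 * d j) ≤ (Clam ^ q * t ^ (lam * q)) * ∏ j, c j := by
    have hchain : (∏ j, ENNReal.ofReal (2 * d j))
        ≤ ENNReal.ofReal (Clam ^ q * t ^ (lam * q)) * ∏ j, ENNReal.ofReal (c j) :=
      hvol1.trans (hint.trans (mul_le_mul_right hvolΩ' _))
    have e1 : (∏ j, ENNReal.ofReal (2 * d j)) = ENNReal.ofReal (∏ j, (2 * d j)) :=
      (ENNReal.ofReal_prod_of_nonneg fun j _ => by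
        have := hd_pos j; linarith).symm
    have e2 : (∏ j, ENNReal.ofReal (c j)) = ENNReal.ofReal (∏ j, c j) :=
      (ENNReal.ofReal_prod_of_nonneg fun j _ => (hc_pos j).le).symm
    have hCq : 0 ≤ Clam ^ q * t ^ (lam * q) :=
      mul_nonneg (Real.rpow_nonneg hClam.le _) (Real.rpow_nonneg ht0.le _)
    rw [e1, e2, ← ENNReal.ofReal_mul hCq] at hchain
    exact (ENNReal.ofReal_le_ofReal_iff
      (mul_nonneg hCq (Finset.prod_nonneg fun j _ => (hc_pos j).le))).1 hchain
  have hPc : 0 < ∏ j, c j := Finset.prod_pos fun j _ => hc_pos j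
  have hprod_d : ∏ j, (2 * d j) = (2 * m₀ / n)^n * (∏ j, c j)⁻¹ := by
    have hfac : ∀ j, 2 * d j = (2 * m₀ / n) * (c j)⁻¹ := by
      intro j
      simp only [hddef]
      rw [div_eq_mul_inv, mul_inv, div_eq_mul_inv]
      ring
    rw [Finset.prod_congr rfl fun j _ => hfac j, Finset.prod_mul_distrib,
      Finset.prod_const, ← Finset.prod_inv_distrib, Finset.card_univ, Fintype.card_fin]
  have hm₀n : (2 * m₀ / n)^n ≤ (Clam ^ q * t ^ (lam * q)) * (∏ j, c j)^2 := by
    have h := hreal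
    rw [hprod_d, ← div_eq_mul_inv, div_le_iff₀ hPc] at h
    calc (2 * m₀ / n)^n ≤ (Clam ^ q * t ^ (lam * q)) * (∏ j, c j) * (∏ j, c j) := h
      _ = (Clam ^ q * t ^ (lam * q)) * (∏ j, c j)^2 := by ring
  -- computing the product of widths
  have hprod_c : ∏ j, c j = 2^(n-1) * K₂ * t ^ (1 + sb) := by
    have h1 : ∏ j, c j = (∏ i : Fin (n-1), 2 * (t / η i) ^ (1 / a i)) * t := by
      rw [hcdef]
      exact prod_dite_fin n hn (fun i => 2 * (t / η i) ^ (1 / a i)) t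
    have h2 : (∏ i : Fin (n-1), 2 * (t / η i) ^ (1 / a i))
        = 2^(n-1) * ∏ i : Fin (n-1), (t / η i) ^ (1 / a i) := by
      rw [Finset.prod_mul_distrib, Finset.prod_const, Finset.card_univ, Fintype.card_fin]
    have h3 : ∀ i : Fin (n-1), (t / η i) ^ (1 / a i)
        = t ^ (1 / a i) * ((η i) ^ (1 / a i))⁻¹ := by
      intro i
      rw [Real.div_rpow ht0.le (hη i).le, div_eq_mul_inv]
    have h4 : (∏ i : Fin (n-1), (t / η i) ^ (1 / a i)) = t ^ sb * K₂ := by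
      rw [Finset.prod_congr rfl fun i _ => h3 i, Finset.prod_mul_distrib, hK₂def, hsb,
        ← Real.rpow_sum_of_pos ht0]
    rw [h1, h2, h4]
    rw [show (1 + sb) = sb + 1 from by ring, Real.rpow_add ht0, Real.rpow_one]
    ring
  -- conclude m₀ ≤ Cs * t ^ β
  have hm₀le : m₀ ≤ C₀ ^ ((1:ℝ)/n) * t ^ β := by
    have hsq : (t ^ (1 + sb))^2 = t ^ (2 + abar n a) := by
      rw [sq, ← Real.rpow_add ht0, habar]
      ring_nf
    have hE : (Clam ^ q * t ^ (lam * q)) * (∏ j, c j)^2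
        = ((2:ℝ)^(n-1) * K₂)^2 * Clam ^ q * t ^ (lam * q + abar n a + 2) := by
      rw [hprod_c, mul_pow, hsq]
      rw [show lam * q + abar n a + 2 = lam * q + (2 + abar n a) from by ring,
        Real.rpow_add ht0 (lam * q) (2 + abar n a)]
      generalize t ^ (lam * q) = T1
      generalize t ^ (2 + abar n a) = T2
      ring
    have hm_eq : m₀ = ((n:ℝ)/2) * (2 * m₀ / n) := by
      field_simp
    have hchain : m₀ ^ n ≤ C₀ * t ^ (lam * q + abar n a + 2) := by
      calc m₀ ^ n = ((n:ℝ)/2)^n * (2 * m₀ / n)^n := by rw [← mul_pow, ← hm_eq]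
        _ ≤ ((n:ℝ)/2)^n * ((Clam ^ q * t ^ (lam * q)) * (∏ j, c j)^2) :=
            mul_le_mul_of_nonneg_left hm₀n (by positivity)
        _ = ((n:ℝ)/2)^n * (((2:ℝ)^(n-1) * K₂)^2 * Clam ^ q
              * t ^ (lam * q + abar n a + 2)) := by rw [hE]
        _ = C₀ * t ^ (lam * q + abar n a + 2) := by
            rw [hC₀def]; ring
    have hroot := Real.rpow_le_rpow (pow_nonneg hm₀sgn.le n) hchain
      (by positivity : (0:ℝ) ≤ 1/(n:ℝ))
    rw [← Real.rpow_natCast m₀ n, ← Real.rpow_mul hm₀sgn.le, mul_one_div,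
      div_self hn0.ne', Real.rpow_one,
      Real.mul_rpow hC₀.le (Real.rpow_nonneg ht0.le _), ← Real.rpow_mul ht0.le,
      mul_one_div] at hroot
    exact hroot
  have hfin : -u x = m₀ + (M / t) * x l := by
    rw [hm₀def, hw₀]; ring
  have hfin2 : (M / t) * x l = M * (x l / t) := by ring
  rw [hfin, hfin2]
  linarith

end KeyStep

/-- the iteration step of Section 5, Case 2. -/
theorem iteration_step_exterior_case2
    (n : ℕ) (hn : 2 ≤ n)
    (a η : Fin (n - 1) → ℝ) (ha : ∀ i, 1 ≤ a i) (hη : ∀ i, 0 < η i)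
    (q : ℝ) (hq0 : 0 < (n : ℝ) - 2 - abar n a)
    (hq1 : (n : ℝ) - 2 - abar n a ≤ q) (hq2 : q < n)
    (lam Clam : ℝ) (hlam0 : (abar n a + 2) / n ≤ lam) (hlam1 : lam < 1) (hClam : 0 < Clam)
    (γ : ℝ) (hγ0 : lam < γ) (hγ1 : γ < min (q / n * lam + (abar n a + 2) / n) 1)
    (D : ℝ) (hD : 0 < D) :
    ∃ Cγ > 0, ∀ (Ω : Set (EuclideanSpace ℝ (Fin n))) (u : EuclideanSpace ℝ (Fin n) → ℝ),
      IsOpen Ω → Convex ℝ Ω → Bornology.IsBounded Ω → Metric.diam Ω ≤ D →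
      Ω ⊆ extSet n hn a η →
      ContinuousOn u (closure Ω) → ContDiffOn ℝ (⊤ : ℕ∞) u Ω → ConvexOn ℝ Ω u →
      (∀ x ∈ Ω, hessDet n u x = |u x| ^ q) →
      (∀ x ∈ frontier Ω, u x = 0) → (∀ x ∈ Ω, u x < 0) →
      (∀ x ∈ Ω, |u x| ≤ Clam * x (lastIdx n hn) ^ lam) →
      ∀ x ∈ Ω, |u x| ≤ Cγ * x (lastIdx n hn) ^ γ := by
  have hnn : 0 < n := by omega
  have hn0 : (0:ℝ) < n := by exact_mod_cast hnn
  have habar0 : 0 ≤ abar n a := Finset.sum_nonneg fun i _ =>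
    div_nonneg (by norm_num) (le_trans zero_le_one (ha i))
  have hq : 0 < q := lt_of_lt_of_le hq0 hq1
  have hlam_pos : 0 < lam := lt_of_lt_of_le (div_pos (by linarith) hn0) hlam0
  have hγpos : 0 < γ := hlam_pos.trans hγ0
  have hγlt1 : γ < 1 := lt_of_lt_of_le hγ1 (min_le_right _ _)
  obtain ⟨Cs, hCs, hkey⟩ := key_step n hn a η ha hη q lam γ hq hlam_pos hγpos Clam hClam
  set β : ℝ := (lam * q + abar n a + 2) / n with hβdef
  have hγβ : γ < β := by
    have h1 : γ < q / n * lam + (abar n a + 2) / n := lt_of_lt_of_le hγ1 (min_le_left _ _)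
    have h2 : q / n * lam + (abar n a + 2) / n = β := by
      rw [hβdef]; field_simp; ring
    linarith [h2 ▸ h1]
  set K : ℝ := (2:ℝ) ^ ((1:ℝ)/(1-γ)) with hKdef
  have hK0 : 0 < K := Real.rpow_pos_of_pos two_pos _
  have hK1 : 1 < K := by
    have hexp : 0 < (1:ℝ)/(1-γ) := by
      have : 0 < 1 - γ := by linarith
      positivity
    calc (1:ℝ) = 2 ^ (0:ℝ) := (Real.rpow_zero 2).symm
      _ < K := Real.rpow_lt_rpow_of_exponent_lt one_lt_two hexp
  have hKγ : K ^ (γ - 1) = 1/2 := by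
    rw [hKdef, ← Real.rpow_mul (by norm_num : (0:ℝ) ≤ 2)]
    have he : (1:ℝ)/(1-γ) * (γ - 1) = -1 := by
      have : (1:ℝ) - γ ≠ 0 := by linarith
      field_simp
      ring
    rw [he]
    rw [Real.rpow_neg_one]
    norm_num
  set r : ℝ := K ^ (lam - 1) with hrdef
  have hr0 : 0 < r := Real.rpow_pos_of_pos hK0 _
  have hr1 : r < 1 := Real.rpow_lt_one_of_one_lt_of_neg hK1 (by linarith)
  set Cβ : ℝ := Cs * K ^ β with hCβdef
  have hCβ0 : 0 < Cβ := mul_pos hCs (Real.rpow_pos_of_pos hK0 _)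
  set Cγ' : ℝ := 2 * (Clam + Cβ) with hCγ'def
  have hCγ'0 : 0 < Cγ' := by positivity
  refine ⟨Cγ', hCγ'0, ?_⟩
  intro Ω u hopen hconv hbdd hdiam hext hcont hsmooth hconvOn hpde hfr0 hneg hClamB
  set l := lastIdx n hn with hl
  have hposl : ∀ y ∈ Ω, 0 < y l := fun y hy => extSet_last_pos n hn a η hη (hext hy)
  -- the main induction on the number of improvement steps
  have main : ∀ mIt : ℕ, ∀ y ∈ Ω, -u y ≤ (Clam * r ^ mIt) * y l ^ lam + Cγ' * y l ^ γ := by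
    intro mIt
    induction mIt with
    | zero =>
      intro y hy
      have h1 : -u y ≤ Clam * y l ^ lam := (neg_le_abs _).trans (hClamB y hy)
      have h2 : 0 ≤ Cγ' * y l ^ γ :=
        mul_nonneg hCγ'0.le (Real.rpow_nonneg (hposl y hy).le _)
      simpa using by linarith
    | succ k ih =>
      intro y hy
      have hyl0 : 0 < y l := hposl y hy
      have hterm0 : 0 ≤ (Clam * r ^ (k+1)) * y l ^ lam := by positivity
      by_cases hyl1 : 1 < y l
      · have h1 : -u y ≤ Clam * y l ^ lam := (neg_le_abs _).trans (hClamB y hy)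
        have h2 : y l ^ lam ≤ y l ^ γ :=
          Real.rpow_le_rpow_of_exponent_le hyl1.le hγ0.le
        have h3 : Clam * y l ^ lam ≤ Cγ' * y l ^ γ := by
          have hb : Clam ≤ Cγ' := by rw [hCγ'def]; linarith
          calc Clam * y l ^ lam ≤ Clam * y l ^ γ :=
                mul_le_mul_of_nonneg_left h2 hClam.le
            _ ≤ Cγ' * y l ^ γ :=
                mul_le_mul_of_nonneg_right hb (Real.rpow_nonneg hyl0.le _)
        linarith
      · push_neg at hyl1
        have hA' : 0 ≤ Clam * r ^ k := by positivity
        have ht : y l < K * y l := by nlinarith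
        have hstep := hkey Ω u hopen hbdd hext hcont hsmooth hpde hfr0 hClamB
          (Clam * r ^ k) Cγ' hA' hCγ'0.le ih y hy (K * y l) ht
        have hKy0 : (0:ℝ) ≤ K := hK0.le
        have e1 : (K * y l) ^ lam = K ^ lam * y l ^ lam := Real.mul_rpow hKy0 hyl0.le
        have e2 : (K * y l) ^ γ = K ^ γ * y l ^ γ := Real.mul_rpow hKy0 hyl0.le
        have e3 : (K * y l) ^ β = K ^ β * y l ^ β := Real.mul_rpow hKy0 hyl0.le
        have e4 : y l / (K * y l) = 1 / K := by
          rw [div_eq_div_iff (by positivity) hK0.ne']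
          ring
        have e5 : K ^ lam * (1/K) = K ^ (lam - 1) := by
          rw [Real.rpow_sub hK0, Real.rpow_one]
          ring
        have e6 : K ^ γ * (1/K) = K ^ (γ - 1) := by
          rw [Real.rpow_sub hK0, Real.rpow_one]
          ring
        have e7 : y l ^ β ≤ y l ^ γ :=
          Real.rpow_le_rpow_of_exponent_ge hyl0 hyl1 hγβ.le
        have hrhs : ((Clam * r ^ k) * (K * y l) ^ lam + Cγ' * (K * y l) ^ γ)
              * (y l / (K * y l)) + Cs * (K * y l) ^ β
            = (Clam * r ^ k) * K ^ (lam - 1) * y l ^ lam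
              + Cγ' * K ^ (γ - 1) * y l ^ γ + Cβ * y l ^ β := by
          rw [e1, e2, e3, e4, ← e5, ← e6, hCβdef]
          ring
        rw [hrhs] at hstep
        have hfinal : (Clam * r ^ k) * K ^ (lam - 1) * y l ^ lam
              + Cγ' * K ^ (γ - 1) * y l ^ γ + Cβ * y l ^ β
            ≤ (Clam * r ^ (k+1)) * y l ^ lam + Cγ' * y l ^ γ := by
          have hx1 : (Clam * r ^ k) * K ^ (lam - 1) = Clam * r ^ (k+1) := by
            rw [hrdef]
            ring
          have hx2 : Cγ' * K ^ (γ - 1) = Cγ' / 2 := by rw [hKγ]; ring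
          have hx3 : Cβ * y l ^ β ≤ Cβ * y l ^ γ :=
            mul_le_mul_of_nonneg_left e7 hCβ0.le
          have hx4 : Cγ' / 2 * y l ^ γ + Cβ * y l ^ γ ≤ Cγ' * y l ^ γ := by
            have hc : Cγ' / 2 + Cβ ≤ Cγ' := by rw [hCγ'def]; linarith
            have := mul_le_mul_of_nonneg_right hc (Real.rpow_nonneg hyl0.le γ)
            linarith [this]
          rw [hx1, hx2]
          linarith
        linarith
  -- pass to the limit
  intro x hx
  have hxl0 : 0 < x l := hposl x hx
  have habs : |u x| = -u x := abs_of_neg (hneg x hx)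
  rw [habs]
  have hlim : Filter.Tendsto (fun mIt : ℕ => (Clam * r ^ mIt) * x l ^ lam + Cγ' * x l ^ γ)
      Filter.atTop (nhds ((Clam * 0) * x l ^ lam + Cγ' * x l ^ γ)) := by
    apply Filter.Tendsto.add_const
    apply Filter.Tendsto.mul_const
    exact (tendsto_pow_atTop_nhds_zero_of_lt_one hr0.le hr1).const_mul Clam
  have hlim' : Filter.Tendsto (fun mIt : ℕ => (Clam * r ^ mIt) * x l ^ lam + Cγ' * x l ^ γ)
      Filter.atTop (nhds (Cγ' * x l ^ γ)) := by
    simpa using hlim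
  exact ge_of_tendsto hlim' (Filter.Eventually.of_forall fun mIt => main mIt x hx)
end
end
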